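/- arXiv:math/0403020 — 3 statements merged into one kernel-verified Lean document; each statement's English description precedes it below -/
import Mathlib

section
/- Let H ∈ ℂ[[z]]^{×n} with o(H) ≥ 1, let F_t(z) = z − tH(z) with formal inverse G_t(z) = z + tN_t(z). Then for any U(z) ∈ ℂ[[z]], the unique power series solution U_t(z) ∈ ℂ[[z,t]] of the Cauchy problem ∂U_t/∂t = ⟨∇U_t, N_t⟩, U_{t=0}(z) = U(z), is given by U_t(z) = U(z + tN_t(z)). -/
/-
Common setup: `ℂ[[z]]` is `MvPowerSeries (Fin n) ℂ`; `ℂ[[z,t]]` is realized as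
`MvPowerSeries (Fin n) (PowerSeries ℂ)` (power series in `z` with coefficients in `ℂ[[t]]`),
and `ℂ[t][[z]]` as `MvPowerSeries (Fin n) (Polynomial ℂ)`.  Substitution, partial
derivatives, Jacobian matrices, order and compositional inverses are defined below.
-/

noncomputable section

/-- Construct a multivariate power series from its coefficient function. -/
def PSmk {n : ℕ} {R : Type*} (f : (Fin n →₀ ℕ) → R) : MvPowerSeries (Fin n) R := f

/-- The formal partial derivative `∂/∂z i` on `R[[z₁,…,zₙ]]`. -/
def pd {n : ℕ} {R : Type*} [CommSemiring R] (i : Fin n) (f : MvPowerSeries (Fin n) R) :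
    MvPowerSeries (Fin n) R :=
  PSmk fun d => (d i + 1 : ℕ) • MvPowerSeries.coeff (R := R) (d + Finsupp.single i 1) f

/-- Substitution of the family `a` (each member of positive order in `z`) into `f`:
the coefficient of `z^m` in `f(a)` is `∑_d (coeff d f) · (coeff of z^m in ∏ aᵢ^dᵢ)`;
the sum is finite when each `aᵢ` has positive order. -/
def sub {n : ℕ} {R : Type*} [CommRing R] (f : MvPowerSeries (Fin n) R)
    (a : Fin n → MvPowerSeries (Fin n) R) : MvPowerSeries (Fin n) R :=
  PSmk fun m => ∑ᶠ d : Fin n →₀ ℕ,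
    (MvPowerSeries.coeff (R := R) d f) * MvPowerSeries.coeff (R := R) m (∏ i, a i ^ d i)

/-- `f` has order (in `z`) at least `k`: all coefficients in total degree `< k` vanish. -/
def ordGE {n : ℕ} {R : Type*} [CommSemiring R] (k : ℕ) (f : MvPowerSeries (Fin n) R) : Prop :=
  ∀ d : Fin n →₀ ℕ, (d.sum fun _ e => e) < k → MvPowerSeries.coeff (R := R) d f = 0

/-- Each component of the formal map `H` has order (in `z`) at least `k`. -/
def vordGE {n : ℕ} {R : Type*} [CommSemiring R] (k : ℕ)
    (H : Fin n → MvPowerSeries (Fin n) R) : Prop :=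
  ∀ i, ordGE k (H i)

/-- The Jacobian matrix `(∂Hᵢ/∂z_j)` (with respect to `z`) of a formal map. -/
def jac {n : ℕ} {R : Type*} [CommSemiring R] (H : Fin n → MvPowerSeries (Fin n) R) :
    Matrix (Fin n) (Fin n) (MvPowerSeries (Fin n) R) :=
  Matrix.of fun i j => pd j (H i)

/-- `G` is the formal compositional inverse of the formal map `F`. -/
def IsInv {n : ℕ} {R : Type*} [CommRing R] (F G : Fin n → MvPowerSeries (Fin n) R) : Prop :=
  (∀ i, sub (F i) G = MvPowerSeries.X i) ∧ (∀ i, sub (G i) F = MvPowerSeries.X i)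

/-- `ℂ[[z,t]]`, realized as power series in `z` with coefficients in `ℂ[[t]]`. -/
abbrev PSZT (n : ℕ) := MvPowerSeries (Fin n) (PowerSeries ℂ)

/-- The element `t` of `ℂ[[z,t]]`. -/
def tT {n : ℕ} : PSZT n := MvPowerSeries.C (σ := Fin n) (R := PowerSeries ℂ) PowerSeries.X

/-- The inclusion `ℂ[[z]] → ℂ[[z,t]]`. -/
def inclZ {n : ℕ} : MvPowerSeries (Fin n) ℂ →+* PSZT n :=
  MvPowerSeries.map (σ := Fin n) (PowerSeries.C (R := ℂ))

/-- Setting `t = 0`, as a ring homomorphism `ℂ[[z,t]] → ℂ[[z]]`. -/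
def evalT0 {n : ℕ} : PSZT n →+* MvPowerSeries (Fin n) ℂ :=
  MvPowerSeries.map (σ := Fin n) (PowerSeries.constantCoeff (R := ℂ))

/-- The formal partial derivative `∂/∂t` on `ℂ[[z,t]]`. -/
def dt {n : ℕ} (f : PSZT n) : PSZT n :=
  PSmk fun d => PowerSeries.mk fun k =>
    ((k + 1 : ℕ) : ℂ) * PowerSeries.coeff (R := ℂ) (k + 1) (MvPowerSeries.coeff d f)

/-- `ℂ[t][[z]]`: power series in `z` whose coefficients are polynomials in `t`. -/
abbrev PSZP (n : ℕ) := MvPowerSeries (Fin n) (Polynomial ℂ)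

/-- The element `t` of `ℂ[t][[z]]`. -/
def tP {n : ℕ} : PSZP n := MvPowerSeries.C (σ := Fin n) (R := Polynomial ℂ) Polynomial.X

/-- The inclusion `ℂ[[z]] → ℂ[t][[z]]`. -/
def inclZP {n : ℕ} : MvPowerSeries (Fin n) ℂ →+* PSZP n :=
  MvPowerSeries.map (σ := Fin n) Polynomial.C

/-- The inclusion `ℂ[t][[z]] → ℂ[[z,t]]`. -/
def polyToSer {n : ℕ} : PSZP n →+* PSZT n :=
  MvPowerSeries.map (σ := Fin n) Polynomial.coeToPowerSeries.ringHom

/-- The substitution `t ↦ t + s` on `ℂ[t][[z]]`, for `s ∈ ℂ`. -/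
def tshift {n : ℕ} (s : ℂ) : PSZP n →+* PSZP n :=
  MvPowerSeries.map (σ := Fin n)
    ((Polynomial.aeval (R := ℂ) (Polynomial.X + Polynomial.C s)).toRingHom)

open MvPowerSeries

namespace Aux

section Gen
variable {n : ℕ} {R : Type*} [CommRing R]




/-- total degree of an exponent -/
def deg {n : ℕ} (d : Fin n →₀ ℕ) : ℕ := ∑ i, d i

lemma deg_eq_sum (d : Fin n →₀ ℕ) : (d.sum fun _ e => e) = deg d := by
  rw [deg, Finsupp.sum_fintype]; intro; rfl

lemma deg_add (a b : Fin n →₀ ℕ) : deg (a + b) = deg a + deg b := by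
  simp [deg, Finset.sum_add_distrib]

lemma apply_le_deg (d : Fin n →₀ ℕ) (i : Fin n) : d i ≤ deg d :=
  Finset.single_le_sum (f := fun i => d i) (fun _ _ => Nat.zero_le _) (Finset.mem_univ i)

lemma coeff_PSmk (f : (Fin n →₀ ℕ) → R) (m : Fin n →₀ ℕ) : coeff (R := R) m (PSmk f) = f m := rfl

lemma ordGE' {k : ℕ} {f : MvPowerSeries (Fin n) R} (h : ordGE k f) {d : Fin n →₀ ℕ}
    (hd : deg d < k) : coeff (R := R) d f = 0 := h d (by rwa [deg_eq_sum])

lemma ordGE_mul {k l : ℕ} {f g : MvPowerSeries (Fin n) R} (hf : ordGE k f) (hg : ordGE l g) :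
    ordGE (k + l) (f * g) := by
  intro d hd
  rw [deg_eq_sum] at hd
  rw [coeff_mul]
  refine Finset.sum_eq_zero fun p hp => ?_
  rw [Finset.HasAntidiagonal.mem_antidiagonal] at hp
  have : deg p.1 + deg p.2 < k + l := by rw [← deg_add, hp]; exact hd
  rcases Nat.lt_or_ge (deg p.1) k with h1 | h1
  · rw [ordGE' hf h1, zero_mul]
  · rw [ordGE' hg (by omega), mul_zero]

lemma ordGE_one : ordGE 0 (1 : MvPowerSeries (Fin n) R) := by intro d hd; omega

lemma ordGE_pow {k : ℕ} {f : MvPowerSeries (Fin n) R} (hf : ordGE k f) (m : ℕ) :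
    ordGE (m * k) (f ^ m) := by
  induction m with
  | zero => exact fun d hd => absurd hd (by omega)
  | succ m ih =>
      have h := ordGE_mul ih hf
      rw [pow_succ]
      have : (m + 1) * k = m * k + k := by ring
      rw [this]; exact h

lemma ordGE_prod {a : Fin n → MvPowerSeries (Fin n) R} (ha : vordGE 1 a) (d : Fin n →₀ ℕ) :
    ordGE (deg d) (∏ i, a i ^ d i) := by
  have : ∀ (s : Finset (Fin n)), ordGE (∑ i ∈ s, d i) (∏ i ∈ s, a i ^ d i) := by
    intro s
    induction s using Finset.induction with
    | empty => simpa using ordGE_one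
    | @insert x s hx ih =>
        rw [Finset.sum_insert hx, Finset.prod_insert hx]
        have h1 : ordGE (d x * 1) ((a x) ^ d x) := ordGE_pow (ha x) (d x)
        rw [mul_one] at h1
        exact ordGE_mul h1 ih
  exact this Finset.univ

/-- the uniform exponent with all coordinates `K` -/
def unif (n K : ℕ) : Fin n →₀ ℕ := Finsupp.equivFunOnFinite.symm (fun _ => K)

lemma unif_apply (K : ℕ) (i : Fin n) : unif n K i = K := rfl

lemma mem_Iic_unif {K : ℕ} {d : Fin n →₀ ℕ} (h : deg d ≤ K) : d ∈ Finset.Iic (unif n K) := by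
  rw [Finset.mem_Iic]
  intro i
  exact le_trans (apply_le_deg d i) h

/-- Key finiteness / truncation lemma for `sub`. -/
lemma coeff_sub_eq_sum {a : Fin n → MvPowerSeries (Fin n) R} (ha : vordGE 1 a)
    (f : MvPowerSeries (Fin n) R) {K : ℕ} {m : Fin n →₀ ℕ} (hm : deg m ≤ K) :
    coeff (R := R) m (sub f a) = ∑ d ∈ Finset.Iic (unif n K),
      coeff (R := R) d f * coeff (R := R) m (∏ i, a i ^ d i) := by
  apply finsum_eq_sum_of_support_subset
  intro d hd
  simp only [Function.mem_support] at hd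
  by_contra hdK
  apply hd
  have : ¬ deg d ≤ K := fun h => hdK (mem_Iic_unif h)
  rw [ordGE' (ordGE_prod ha d) (by omega), mul_zero]



lemma pd_coeff (j : Fin n) (f : MvPowerSeries (Fin n) R) (m : Fin n →₀ ℕ) :
    coeff (R := R) m (pd j f) = (m j + 1 : ℕ) • coeff (R := R) (m + Finsupp.single j 1) f := rfl

lemma pd_add (j : Fin n) (f g : MvPowerSeries (Fin n) R) :
    pd j (f + g) = pd j f + pd j g := by
  ext m
  simp [pd_coeff, map_add, smul_add]

lemma pd_zero (j : Fin n) : pd j (0 : MvPowerSeries (Fin n) R) = 0 := by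
  ext m; simp [pd_coeff]

lemma pd_C_mul (j : Fin n) (c : R) (f : MvPowerSeries (Fin n) R) :
    pd j (C (σ := Fin n) (R := R) c * f) = C (σ := Fin n) (R := R) c * pd j f := by
  ext m
  simp only [pd_coeff, coeff_C_mul]
  rw [mul_smul_comm]

lemma pd_C (j : Fin n) (c : R) : pd j (C (σ := Fin n) (R := R) c : MvPowerSeries (Fin n) R) = 0 := by
  ext m
  simp only [pd_coeff, map_zero]
  rw [show ((C (σ := Fin n) (R := R) c : MvPowerSeries (Fin n) R)) = monomial (R := R) 0 c from rfl]
  rw [coeff_monomial_ne ?_ c, smul_zero]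
  intro h
  have := congrArg (fun q => q j) h
  simp [Finsupp.add_apply, Finsupp.single_eq_same] at this

/-- reindexing an antidiagonal sum along `+ single j 1` in the first component -/
lemma sum_antidiagonal_shift {M : Type*} [AddCommMonoid M] (d : Fin n →₀ ℕ) (j : Fin n)
    (F : (Fin n →₀ ℕ) → (Fin n →₀ ℕ) → M) :
    ∑ p ∈ (Finset.HasAntidiagonal.antidiagonal (d + Finsupp.single j 1) :
        Finset ((Fin n →₀ ℕ) × (Fin n →₀ ℕ))), (p.1 j) • F p.1 p.2
      = ∑ p ∈ (Finset.HasAntidiagonal.antidiagonal d :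
        Finset ((Fin n →₀ ℕ) × (Fin n →₀ ℕ))), (p.1 j + 1) • F (p.1 + Finsupp.single j 1) p.2 := by
  classical
  conv_lhs => rw [← Finset.sum_filter_of_ne (p := fun q => q.1 j ≠ 0)
    (by intro x _ hx h0; exact hx (by rw [h0, zero_smul]))]
  refine Finset.sum_nbij' (fun p => (p.1 - Finsupp.single j 1, p.2))
    (fun p => (p.1 + Finsupp.single j 1, p.2)) ?_ ?_ ?_ ?_ ?_
  · rintro ⟨a, b⟩ hab
    simp only [Finset.mem_filter, Finset.HasAntidiagonal.mem_antidiagonal] at hab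
    obtain ⟨hsum, hj⟩ := hab
    have hle : Finsupp.single j 1 ≤ a := Finsupp.single_le_iff.2 (by omega)
    rw [Finset.HasAntidiagonal.mem_antidiagonal]
    have h2 : (a - Finsupp.single j 1 + Finsupp.single j 1) + b = d + Finsupp.single j 1 := by
      rw [tsub_add_cancel_of_le hle]; exact hsum
    have h3 : (a - Finsupp.single j 1) + b + Finsupp.single j 1 = d + Finsupp.single j 1 := by
      rw [← h2]; exact add_right_comm _ _ _
    exact add_right_cancel h3
  · rintro ⟨a, b⟩ hab
    rw [Finset.HasAntidiagonal.mem_antidiagonal] at hab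
    simp only [Finset.mem_filter, Finset.HasAntidiagonal.mem_antidiagonal]
    constructor
    · rw [← hab]; exact add_right_comm _ _ _
    · simp [Finsupp.add_apply, Finsupp.single_eq_same]
  · rintro ⟨a, b⟩ hab
    simp only [Finset.mem_filter, Finset.HasAntidiagonal.mem_antidiagonal] at hab
    have hle : Finsupp.single j 1 ≤ a := Finsupp.single_le_iff.2 (by omega)
    simp [tsub_add_cancel_of_le hle]
  · rintro ⟨a, b⟩ _
    simp
  · rintro ⟨a, b⟩ hab
    simp only [Finset.mem_filter, Finset.HasAntidiagonal.mem_antidiagonal] at hab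
    obtain ⟨hsum, hj⟩ := hab
    have hle : Finsupp.single j 1 ≤ a := Finsupp.single_le_iff.2 (by omega)
    have h1 : ((a - Finsupp.single j 1 : Fin n →₀ ℕ)) j + 1 = a j := by
      rw [Finsupp.tsub_apply, Finsupp.single_eq_same]; omega
    rw [tsub_add_cancel_of_le hle, h1]

lemma pd_mul (j : Fin n) (f g : MvPowerSeries (Fin n) R) :
    pd j (f * g) = pd j f * g + f * pd j g := by
  classical
  ext m
  rw [map_add, pd_coeff, coeff_mul, coeff_mul, coeff_mul, Finset.smul_sum]
  have h1 : ∀ p ∈ Finset.HasAntidiagonal.antidiagonal (m + Finsupp.single j 1),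
      (m j + 1 : ℕ) • (coeff (R := R) p.1 f * coeff (R := R) p.2 g)
        = (p.1 j) • (coeff (R := R) p.1 f * coeff (R := R) p.2 g)
          + (p.2 j) • (coeff (R := R) p.1 f * coeff (R := R) p.2 g) := by
    intro p hp
    rw [Finset.HasAntidiagonal.mem_antidiagonal] at hp
    have : p.1 j + p.2 j = m j + 1 := by
      have := congrArg (fun q => q j) hp
      simpa [Finsupp.add_apply, Finsupp.single_eq_same] using this
    rw [← add_smul, this]
  rw [Finset.sum_congr rfl h1, Finset.sum_add_distrib]
  congr 1
  · rw [sum_antidiagonal_shift m j (fun a b => coeff (R := R) a f * coeff (R := R) b g)]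
    refine Finset.sum_congr rfl fun p _ => ?_
    rw [pd_coeff, smul_mul_assoc]
  · -- second component: swap the antidiagonal
    rw [show (∑ p ∈ (Finset.HasAntidiagonal.antidiagonal (m + Finsupp.single j 1) :
            Finset ((Fin n →₀ ℕ) × (Fin n →₀ ℕ))),
          (p.2 j) • (coeff (R := R) p.1 f * coeff (R := R) p.2 g))
        = ∑ p ∈ (Finset.HasAntidiagonal.antidiagonal (m + Finsupp.single j 1) :
            Finset ((Fin n →₀ ℕ) × (Fin n →₀ ℕ))),
          (p.1 j) • (coeff (R := R) p.2 f * coeff (R := R) p.1 g) from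
      Finset.sum_nbij' Prod.swap Prod.swap
        (fun p hp => by simpa [Finset.HasAntidiagonal.mem_antidiagonal, add_comm] using hp)
        (fun p hp => by simpa [Finset.HasAntidiagonal.mem_antidiagonal, add_comm] using hp)
        (fun _ _ => rfl) (fun _ _ => rfl) (fun p _ => rfl)]
    rw [sum_antidiagonal_shift m j (fun a b => coeff (R := R) b f * coeff (R := R) a g)]
    rw [show (∑ p ∈ (Finset.HasAntidiagonal.antidiagonal m : Finset ((Fin n →₀ ℕ) × (Fin n →₀ ℕ))),
          (p.1 j + 1) • (coeff (R := R) p.2 f * coeff (R := R) (p.1 + Finsupp.single j 1) g))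
        = ∑ p ∈ Finset.HasAntidiagonal.antidiagonal m,
          (p.2 j + 1) • (coeff (R := R) p.1 f * coeff (R := R) (p.2 + Finsupp.single j 1) g) from
      Finset.sum_nbij' Prod.swap Prod.swap
        (fun p hp => by simpa [Finset.HasAntidiagonal.mem_antidiagonal, add_comm] using hp)
        (fun p hp => by simpa [Finset.HasAntidiagonal.mem_antidiagonal, add_comm] using hp)
        (fun _ _ => rfl) (fun _ _ => rfl) (fun p _ => rfl)]
    refine Finset.sum_congr rfl fun p _ => ?_
    rw [pd_coeff, mul_smul_comm]


lemma deg_mono {m1 m : Fin n →₀ ℕ} (h : m1 ≤ m) : deg m1 ≤ deg m :=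
  Finset.sum_le_sum fun i _ => h i

lemma sub_add {a : Fin n → MvPowerSeries (Fin n) R} (ha : vordGE 1 a)
    (f g : MvPowerSeries (Fin n) R) : sub (f + g) a = sub f a + sub g a := by
  apply MvPowerSeries.ext; intro m
  rw [map_add, coeff_sub_eq_sum ha f (le_refl (deg m)), coeff_sub_eq_sum ha g (le_refl (deg m)),
    coeff_sub_eq_sum ha (f + g) (le_refl (deg m)), ← Finset.sum_add_distrib]
  refine Finset.sum_congr rfl fun d _ => ?_
  rw [map_add, add_mul]

lemma sub_sub' {a : Fin n → MvPowerSeries (Fin n) R} (ha : vordGE 1 a)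
    (f g : MvPowerSeries (Fin n) R) : sub (f - g) a = sub f a - sub g a := by
  apply MvPowerSeries.ext; intro m
  rw [map_sub, coeff_sub_eq_sum ha f (le_refl (deg m)), coeff_sub_eq_sum ha g (le_refl (deg m)),
    coeff_sub_eq_sum ha (f - g) (le_refl (deg m)), ← Finset.sum_sub_distrib]
  refine Finset.sum_congr rfl fun d _ => ?_
  rw [map_sub, sub_mul]

lemma sub_C_mul {a : Fin n → MvPowerSeries (Fin n) R} (ha : vordGE 1 a)
    (c : R) (f : MvPowerSeries (Fin n) R) :
    sub (C (σ := Fin n) (R := R) c * f) a = C (σ := Fin n) (R := R) c * sub f a := by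
  apply MvPowerSeries.ext; intro m
  rw [coeff_C_mul, coeff_sub_eq_sum ha f (le_refl (deg m)),
    coeff_sub_eq_sum ha _ (le_refl (deg m)), Finset.mul_sum]
  refine Finset.sum_congr rfl fun d _ => ?_
  rw [coeff_C_mul, mul_assoc]

lemma sub_zeroF (a : Fin n → MvPowerSeries (Fin n) R) : sub 0 a = 0 := by
  apply MvPowerSeries.ext; intro m
  show (∑ᶠ d : Fin n →₀ ℕ, coeff (R := R) d (0 : MvPowerSeries (Fin n) R) * _) = _
  simp

lemma prod_pow_single (a : Fin n → MvPowerSeries (Fin n) R) (i : Fin n) :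
    ∏ k, a k ^ (Finsupp.single i 1) k = a i := by
  rw [Finset.prod_eq_single i]
  · rw [Finsupp.single_eq_same, pow_one]
  · intro b _ hb
    rw [Finsupp.single_apply, if_neg (fun h => hb h.symm), pow_zero]
  · exact fun h => absurd (Finset.mem_univ i) h

lemma sub_X (a : Fin n → MvPowerSeries (Fin n) R) (i : Fin n) : sub (X i) a = a i := by
  apply MvPowerSeries.ext; intro m
  show (∑ᶠ d : Fin n →₀ ℕ, coeff (R := R) d (X i) * coeff (R := R) m (∏ k, a k ^ d k)) = _
  rw [finsum_eq_single _ (Finsupp.single i 1)]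
  · rw [coeff_X, if_pos rfl, one_mul, prod_pow_single]
  · intro d hd
    rw [coeff_X, if_neg hd, zero_mul]

/-- reindexing a sum over `Iic u` along `+ single k 1` -/
lemma sum_Iic_shift {M : Type*} [AddCommMonoid M] (u : Fin n →₀ ℕ) (k : Fin n)
    (hk : 1 ≤ u k) (F : (Fin n →₀ ℕ) → M) :
    ∑ d ∈ Finset.Iic u, (d k) • F d
      = ∑ e ∈ Finset.Iic (u - Finsupp.single k 1), (e k + 1) • F (e + Finsupp.single k 1) := by
  classical
  conv_lhs => rw [← Finset.sum_filter_of_ne (p := fun q => q k ≠ 0)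
    (by intro x _ hx h0; exact hx (by rw [h0, zero_smul]))]
  refine Finset.sum_nbij' (fun d => d - Finsupp.single k 1) (fun e => e + Finsupp.single k 1)
    ?_ ?_ ?_ ?_ ?_
  · intro d hd
    simp only [Finset.mem_filter, Finset.mem_Iic] at hd ⊢
    exact tsub_le_tsub_right hd.1 _
  · intro e he
    simp only [Finset.mem_filter, Finset.mem_Iic] at he ⊢
    constructor
    · calc e + Finsupp.single k 1 ≤ (u - Finsupp.single k 1) + Finsupp.single k 1 :=
            add_le_add_left he _
        _ = u := tsub_add_cancel_of_le (Finsupp.single_le_iff.2 hk)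
    · simp [Finsupp.add_apply, Finsupp.single_eq_same]
  · intro d hd
    simp only [Finset.mem_filter, Finset.mem_Iic] at hd
    exact tsub_add_cancel_of_le (Finsupp.single_le_iff.2 (by omega))
  · intro e _
    exact add_tsub_cancel_right _ _
  · intro d hd
    simp only [Finset.mem_filter, Finset.mem_Iic] at hd
    have h1 : ((d - Finsupp.single k 1 : Fin n →₀ ℕ)) k + 1 = d k := by
      rw [Finsupp.tsub_apply, Finsupp.single_eq_same]; omega
    rw [tsub_add_cancel_of_le (Finsupp.single_le_iff.2 (by omega)), h1]

lemma coeff_mul_left_congr {x x' y : MvPowerSeries (Fin n) R} {m : Fin n →₀ ℕ}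
    (h : ∀ m1, m1 ≤ m → coeff (R := R) m1 x = coeff (R := R) m1 x') :
    coeff (R := R) m (x * y) = coeff (R := R) m (x' * y) := by
  classical
  rw [coeff_mul, coeff_mul]
  refine Finset.sum_congr rfl fun p hp => ?_
  rw [Finset.HasAntidiagonal.mem_antidiagonal] at hp
  rw [h p.1 (by rw [← hp]; exact le_add_right (le_refl _))]

/-- Master chain-rule lemma for derivations through substitution. -/
theorem Dsub (D : MvPowerSeries (Fin n) R → MvPowerSeries (Fin n) R)
    (hadd : ∀ x y, D (x + y) = D x + D y)
    (hmul : ∀ x y, D (x * y) = D x * y + x * D y)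
    (hloc : ∀ (m : Fin n →₀ ℕ) (x y : MvPowerSeries (Fin n) R),
      (∀ m', deg m' ≤ deg m + 1 → coeff (R := R) m' x = coeff (R := R) m' y) →
      coeff (R := R) m (D x) = coeff (R := R) m (D y))
    (f g : MvPowerSeries (Fin n) R)
    (hfg : ∀ d : Fin n →₀ ℕ, D (C (σ := Fin n) (R := R) (coeff (R := R) d f)) = C (σ := Fin n) (R := R) (coeff (R := R) d g))
    (a : Fin n → MvPowerSeries (Fin n) R) (ha : vordGE 1 a) :
    D (sub f a) = sub g a + ∑ k, sub (pd k f) a * D (a k) := by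
  classical
  have Dhom : ∀ (s : Finset (Fin n →₀ ℕ)) (h : (Fin n →₀ ℕ) → MvPowerSeries (Fin n) R),
      D (∑ x ∈ s, h x) = ∑ x ∈ s, D (h x) := fun s h =>
    map_sum (AddMonoidHom.mk' D hadd) h s
  have D0 : D 0 = 0 := by
    have := hadd 0 0
    rw [add_zero] at this
    simpa using this
  have D1 : D 1 = 0 := by
    have := hmul 1 1
    rw [mul_one, mul_one, one_mul] at this
    simpa using this
  have Dpow : ∀ (x : MvPowerSeries (Fin n) R) (m : ℕ),
      D (x ^ m) = m • (x ^ (m - 1) * D x) := by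
    intro x m
    induction m with
    | zero => simpa using D1
    | succ m ih =>
        rw [pow_succ, hmul, ih]
        cases m with
        | zero => simp
        | succ m' =>
            rw [smul_mul_assoc]
            have h2 : x ^ (m' + 1 - 1) * D x * x = x ^ (m' + 1) * D x := by
              rw [Nat.add_sub_cancel, mul_comm (x ^ m' * D x) x, ← mul_assoc, ← pow_succ']
            rw [h2, show (m' + 1 + 1 - 1 : ℕ) = m' + 1 from rfl]
            simp only [succ_nsmul, smul_mul_assoc, nsmul_eq_mul]
  have Dprod : ∀ (s : Finset (Fin n)) (h : Fin n → MvPowerSeries (Fin n) R),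
      D (∏ i ∈ s, h i) = ∑ k ∈ s, (∏ i ∈ s.erase k, h i) * D (h k) := by
    intro s h
    induction s using Finset.induction with
    | empty => simpa using D1
    | @insert x s hx ih =>
        rw [Finset.prod_insert hx, hmul, ih, Finset.sum_insert hx, Finset.erase_insert hx,
          Finset.mul_sum]
        congr 1
        · exact mul_comm _ _
        refine Finset.sum_congr rfl fun k hk => ?_
        have hxk : x ≠ k := fun h' => hx (h' ▸ hk)
        rw [Finset.erase_insert_of_ne hxk]
        rw [Finset.prod_insert (fun h' => hx (Finset.mem_of_mem_erase h'))]
        ring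
  have DP : ∀ d : Fin n →₀ ℕ, D (∏ i, a i ^ d i)
      = ∑ k, (d k) • ((∏ i, a i ^ ((d - Finsupp.single k 1) : Fin n →₀ ℕ) i) * D (a k)) := by
    intro d
    rw [Dprod]
    refine Finset.sum_congr rfl fun k _ => ?_
    rw [Dpow]
    have hP : (∏ i, a i ^ ((d - Finsupp.single k 1) : Fin n →₀ ℕ) i)
        = a k ^ (d k - 1) * ∏ i ∈ Finset.univ.erase k, a i ^ d i := by
      rw [← Finset.mul_prod_erase Finset.univ
        (fun i => a i ^ ((d - Finsupp.single k 1) : Fin n →₀ ℕ) i) (Finset.mem_univ k)]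
      congr 1
      · rw [Finsupp.tsub_apply, Finsupp.single_eq_same]
      · refine Finset.prod_congr rfl fun i hi => ?_
        have : ((d - Finsupp.single k 1) : Fin n →₀ ℕ) i = d i := by
          rw [Finsupp.tsub_apply, Finsupp.single_apply,
            if_neg (fun h => (Finset.mem_erase.1 hi).1 h.symm)]
          omega
        rw [this]
    rw [hP, mul_smul_comm]
    congr 1
    ring
  -- main computation
  apply MvPowerSeries.ext; intro m
  set K := deg m + 1 with hK
  set u := unif n K with hu
  set T : MvPowerSeries (Fin n) R :=
    ∑ d ∈ Finset.Iic u, C (σ := Fin n) (R := R) (coeff (R := R) d f) * ∏ i, a i ^ d i with hT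
  have hcoeffT : ∀ (f' : MvPowerSeries (Fin n) R) (m' : Fin n →₀ ℕ), deg m' ≤ K →
      coeff (R := R) m' (sub f' a) = coeff (R := R) m'
        (∑ d ∈ Finset.Iic u, C (σ := Fin n) (R := R) (coeff (R := R) d f') * ∏ i, a i ^ d i) := by
    intro f' m' hm'
    rw [coeff_sub_eq_sum ha f' hm', map_sum]
    refine Finset.sum_congr rfl fun d _ => ?_
    rw [coeff_C_mul]
  have step1 : coeff (R := R) m (D (sub f a)) = coeff (R := R) m (D T) := by
    refine hloc m _ _ fun m' hm' => ?_
    exact hcoeffT f m' hm'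
  -- series-level identity for D T
  have step2 : D T = (∑ d ∈ Finset.Iic u, C (σ := Fin n) (R := R) (coeff (R := R) d g) * ∏ i, a i ^ d i)
      + ∑ k, ∑ e ∈ Finset.Iic (u - Finsupp.single k 1),
          (e k + 1) • (C (σ := Fin n) (R := R) (coeff (R := R) (e + Finsupp.single k 1) f)
            * ((∏ i, a i ^ e i) * D (a k))) := by
    rw [hT, Dhom]
    have : ∀ d ∈ Finset.Iic u,
        D (C (σ := Fin n) (R := R) (coeff (R := R) d f) * ∏ i, a i ^ d i)
        = C (σ := Fin n) (R := R) (coeff (R := R) d g) * (∏ i, a i ^ d i)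
          + ∑ k, (d k) • (C (σ := Fin n) (R := R) (coeff (R := R) d f)
              * ((∏ i, a i ^ ((d - Finsupp.single k 1) : Fin n →₀ ℕ) i) * D (a k))) := by
      intro d _
      rw [hmul, hfg, DP, Finset.mul_sum]
      congr 1
      refine Finset.sum_congr rfl fun k _ => ?_
      rw [mul_smul_comm]
    rw [Finset.sum_congr rfl this, Finset.sum_add_distrib]
    congr 1
    rw [Finset.sum_comm]
    refine Finset.sum_congr rfl fun k _ => ?_
    have hk1 : 1 ≤ u k := by rw [hu, unif_apply]; omega
    rw [sum_Iic_shift u k hk1 (fun d => C (σ := Fin n) (R := R) (coeff (R := R) d f)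
      * ((∏ i, a i ^ ((d - Finsupp.single k 1) : Fin n →₀ ℕ) i) * D (a k)))]
    refine Finset.sum_congr rfl fun e _ => ?_
    rw [add_tsub_cancel_right]
  -- compare with the target, coefficientwise at m
  rw [step1, step2, map_add, map_add]
  congr 1
  · exact (hcoeffT g m (by omega)).symm
  · rw [map_sum, map_sum]
    refine Finset.sum_congr rfl fun k _ => ?_
    have hTk : coeff (R := R) m (sub (pd k f) a * D (a k))
        = coeff (R := R) m ((∑ d ∈ Finset.Iic u,
            C (σ := Fin n) (R := R) (coeff (R := R) d (pd k f)) * ∏ i, a i ^ d i) * D (a k)) := by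
      refine coeff_mul_left_congr fun m1 hm1 => ?_
      exact hcoeffT (pd k f) m1 (le_trans (deg_mono hm1) (by omega))
    have hRH : coeff (R := R) m (sub (pd k f) a * D (a k))
        = ∑ d ∈ Finset.Iic u, coeff (R := R) m ((d k + 1)
            • (C (σ := Fin n) (R := R) (coeff (R := R) (d + Finsupp.single k 1) f)
              * ((∏ i, a i ^ d i) * D (a k)))) := by
      rw [hTk, Finset.sum_mul, map_sum]
      refine Finset.sum_congr rfl fun d _ => ?_
      congr 1
      rw [pd_coeff, map_nsmul, smul_mul_assoc, smul_mul_assoc, mul_assoc]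
    rw [hRH, map_sum]
    have hsubset : Finset.Iic ((u - Finsupp.single k 1 : Fin n →₀ ℕ)) ⊆ Finset.Iic u :=
      Finset.Iic_subset_Iic.2 tsub_le_self
    refine Finset.sum_subset hsubset ?_
    intro d hdu hdnot
    rw [Finset.mem_Iic] at hdu
    have hdk : d k = K := by
      by_contra hne
      apply hdnot
      rw [Finset.mem_Iic]
      intro i
      rw [Finsupp.tsub_apply, Finsupp.single_apply, hu, unif_apply]
      have h3 := hdu i
      rw [hu, unif_apply] at h3
      by_cases hik : k = i
      · rw [if_pos hik]
        subst hik
        omega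
      · rw [if_neg hik]
        omega
    have hdeg : K ≤ deg d := hdk ▸ apply_le_deg d k
    rw [map_nsmul, coeff_C_mul, coeff_mul]
    have hz : ∀ p ∈ Finset.HasAntidiagonal.antidiagonal m,
        coeff (R := R) p.1 (∏ i, a i ^ d i) * coeff (R := R) p.2 (D (a k)) = 0 := by
      intro p hp
      rw [Finset.HasAntidiagonal.mem_antidiagonal] at hp
      have hp1 : deg p.1 ≤ deg m := deg_mono (by rw [← hp]; exact le_add_right (le_refl _))
      rw [ordGE' (ordGE_prod ha d) (by omega), zero_mul]
    rw [Finset.sum_congr rfl hz, Finset.sum_const, smul_zero, mul_zero, smul_zero]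

lemma deg_single (j : Fin n) : deg (Finsupp.single j 1 : Fin n →₀ ℕ) = 1 := by
  rw [deg, Finset.sum_eq_single j]
  · rw [Finsupp.single_eq_same]
  · intro b _ hb
    rw [Finsupp.single_apply, if_neg (fun h => hb h.symm)]
  · exact fun h => absurd (Finset.mem_univ j) h

lemma pd_X (i k : Fin n) :
    pd i (X k : MvPowerSeries (Fin n) R) = if i = k then 1 else 0 := by
  apply MvPowerSeries.ext; intro m
  rw [pd_coeff]
  by_cases hik : i = k
  · subst hik
    rw [if_pos rfl]
    by_cases hm : m = 0
    · subst hm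
      rw [coeff_X, if_pos (zero_add _), coeff_one, if_pos rfl]
      simp
    · rw [coeff_X, if_neg (by
        intro h
        exact hm (by
          have : m + Finsupp.single i 1 = 0 + Finsupp.single i 1 := by rw [h, zero_add]
          exact add_right_cancel this)), coeff_one, if_neg hm, smul_zero]
  · rw [if_neg hik, coeff_X, if_neg ?_, map_zero, smul_zero]
    intro h
    have h2 := congrArg (fun q => q i) h
    simp only [Finsupp.add_apply, Finsupp.single_eq_same] at h2
    rw [Finsupp.single_apply, if_neg (fun hh : k = i => hik hh.symm)] at h2
    omega

lemma pd_subF (j : Fin n) (f g : MvPowerSeries (Fin n) R) :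
    pd j (f - g) = pd j f - pd j g := by
  apply MvPowerSeries.ext; intro m
  simp [pd_coeff, map_sub, smul_sub]

lemma prod_X_pow (d : Fin n →₀ ℕ) :
    (∏ i, (X i : MvPowerSeries (Fin n) R) ^ d i) = monomial (R := R) d 1 := by
  have key : ∀ s : Finset (Fin n), (∏ i ∈ s, (X i : MvPowerSeries (Fin n) R) ^ d i)
      = monomial (R := R) (∑ i ∈ s, Finsupp.single i (d i)) 1 := by
    intro s
    induction s using Finset.induction with
    | empty =>
        simp only [Finset.prod_empty, Finset.sum_empty]
        rw [show (monomial (R := R) (0 : Fin n →₀ ℕ) (1 : R)) = C (σ := Fin n) (R := R) 1 from rfl, map_one]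
    | @insert x s hx ih =>
        rw [Finset.prod_insert hx, Finset.sum_insert hx, ih, X_pow_eq, monomial_mul_monomial,
          one_mul]
  rw [key Finset.univ]
  congr 1
  have h2 : (∑ i, Finsupp.single i (d i)) = d := by
    conv_rhs => rw [← Finsupp.sum_single d]
    rw [Finsupp.sum_fintype]
    intro i
    exact Finsupp.single_zero i
  rw [h2]

/-- chain rule for `pd` through substitution -/
lemma pd_chain (j : Fin n) (f : MvPowerSeries (Fin n) R)
    (a : Fin n → MvPowerSeries (Fin n) R) (ha : vordGE 1 a) :
    pd j (sub f a) = ∑ k, sub (pd k f) a * pd j (a k) := by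
  have := Dsub (pd j) (pd_add j) (pd_mul j) ?_ f 0 ?_ a ha
  · rw [this, sub_zeroF, zero_add]
  · intro m x y h
    rw [pd_coeff, pd_coeff, h (m + Finsupp.single j 1) (by rw [deg_add, deg_single])]
  · intro d
    rw [pd_C, map_zero, map_zero]

end Gen

section T
variable {n : ℕ}

variable {n : ℕ}

local notation "DT" => (PowerSeries.derivative (R := ℂ) : PowerSeries ℂ → PowerSeries ℂ)

lemma dt_coeff (f : PSZT n) (m : Fin n →₀ ℕ) :
    MvPowerSeries.coeff m (dt f) = DT (MvPowerSeries.coeff m f) := by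
  ext k
  rw [PowerSeries.coeff_derivative]
  have h : MvPowerSeries.coeff m (dt f) = PowerSeries.mk fun k =>
      ((k + 1 : ℕ) : ℂ) * PowerSeries.coeff (R := ℂ) (k + 1) (MvPowerSeries.coeff m f) := rfl
  rw [h, PowerSeries.coeff_mk]
  push_cast
  ring

lemma dt_add (f g : PSZT n) : dt (f + g) = dt f + dt g := by
  apply MvPowerSeries.ext; intro m
  simp [dt_coeff, map_add]

lemma dt_sub' (f g : PSZT n) : dt (f - g) = dt f - dt g := by
  apply MvPowerSeries.ext; intro m
  simp [dt_coeff, map_sub]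

lemma dt_mul (f g : PSZT n) : dt (f * g) = dt f * g + f * dt g := by
  classical
  apply MvPowerSeries.ext; intro m
  rw [map_add, dt_coeff, coeff_mul, coeff_mul, coeff_mul, map_sum,
    ← Finset.sum_add_distrib]
  refine Finset.sum_congr rfl fun p _ => ?_
  rw [dt_coeff, dt_coeff]
  have := Derivation.leibniz (PowerSeries.derivative (R := ℂ))
    (MvPowerSeries.coeff p.1 f) (MvPowerSeries.coeff p.2 g)
  rw [this]
  simp only [smul_eq_mul]
  ring

lemma dt_C (c : PowerSeries ℂ) :
    dt (MvPowerSeries.C (σ := Fin n) c) = MvPowerSeries.C (σ := Fin n) (DT c) := by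
  apply MvPowerSeries.ext; intro m
  rw [dt_coeff]
  by_cases h : m = 0
  · subst h; simp [MvPowerSeries.coeff_zero_C]
  · rw [MvPowerSeries.coeff_C, MvPowerSeries.coeff_C, if_neg h, if_neg h, map_zero]

lemma dt_tT : dt (tT : PSZT n) = 1 := by
  rw [show (tT : PSZT n) = MvPowerSeries.C (σ := Fin n) PowerSeries.X from rfl, dt_C]
  simp

lemma dt_inclZ (U : MvPowerSeries (Fin n) ℂ) : dt (inclZ U) = 0 := by
  apply MvPowerSeries.ext; intro m
  rw [dt_coeff]
  show DT (PowerSeries.C (R := ℂ) (MvPowerSeries.coeff m U)) = 0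
  simp


lemma dt_X (k : Fin n) : dt (X k : PSZT n) = 0 := by
  apply MvPowerSeries.ext; intro m
  rw [dt_coeff, map_zero, coeff_X]
  split_ifs
  · simp
  · exact map_zero _

lemma coeff_tT_mul (x : PSZT n) (d : Fin n →₀ ℕ) :
    MvPowerSeries.coeff d (tT * x) = PowerSeries.X * MvPowerSeries.coeff d x := by
  rw [show (tT : PSZT n) = MvPowerSeries.C (σ := Fin n) PowerSeries.X from rfl, coeff_C_mul]

lemma tT_cancel {x y : PSZT n} (h : tT * x = tT * y) : x = y := by
  apply MvPowerSeries.ext; intro d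
  have h2 := congrArg (MvPowerSeries.coeff d) h
  rw [coeff_tT_mul, coeff_tT_mul] at h2
  exact mul_left_cancel₀ PowerSeries.X_ne_zero h2

/-- chain rule for `dt` through substitution -/
lemma dt_chain (f : PSZT n) (a : Fin n → PSZT n) (ha : vordGE 1 a) :
    dt (sub f a) = sub (dt f) a + ∑ k, sub (pd k f) a * dt (a k) := by
  refine Dsub dt dt_add dt_mul ?_ f (dt f) ?_ a ha
  · intro m x y h
    rw [dt_coeff, dt_coeff, h m (by omega)]
  · intro d
    rw [dt_C]
    congr 1
    rw [dt_coeff]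

lemma evalT0_tT : (evalT0 (tT : PSZT n)) = 0 := by
  rw [show (tT : PSZT n) = MvPowerSeries.C (σ := Fin n) PowerSeries.X from rfl]
  rw [show (evalT0 : PSZT n →+* MvPowerSeries (Fin n) ℂ)
      = MvPowerSeries.map (σ := Fin n) (PowerSeries.constantCoeff (R := ℂ)) from rfl]
  apply MvPowerSeries.ext; intro d
  rw [coeff_map, coeff_C, map_zero]
  split_ifs
  · exact PowerSeries.constantCoeff_X
  · exact map_zero _

lemma evalT0_X (i : Fin n) : evalT0 (X i : PSZT n) = X i := by
  apply MvPowerSeries.ext; intro d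
  rw [show (evalT0 : PSZT n →+* MvPowerSeries (Fin n) ℂ)
      = MvPowerSeries.map (σ := Fin n) (PowerSeries.constantCoeff (R := ℂ)) from rfl]
  rw [coeff_map, coeff_X, coeff_X]
  split_ifs
  · exact map_one _
  · exact map_zero _

lemma evalT0_inclZ (U : MvPowerSeries (Fin n) ℂ) : evalT0 (inclZ U) = U := by
  apply MvPowerSeries.ext; intro d
  rw [show (evalT0 : PSZT n →+* MvPowerSeries (Fin n) ℂ)
      = MvPowerSeries.map (σ := Fin n) (PowerSeries.constantCoeff (R := ℂ)) from rfl]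
  rw [coeff_map]
  rw [show MvPowerSeries.coeff d (inclZ U)
      = PowerSeries.C (R := ℂ) (MvPowerSeries.coeff d U) from rfl]
  exact PowerSeries.constantCoeff_C _

lemma coeff_inclZ (U : MvPowerSeries (Fin n) ℂ) (d : Fin n →₀ ℕ) :
    MvPowerSeries.coeff d (inclZ U) = PowerSeries.C (R := ℂ) (MvPowerSeries.coeff d U) := rfl

/-- t-adic induction vanishing lemma -/
lemma tvanish {e : Fin n → PSZT n} {A : Fin n → Fin n → PSZT n}
    (h : ∀ i, e i = tT * ∑ k, A i k * e k) : ∀ i, e i = 0 := by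
  have key : ∀ p : ℕ, ∀ (i : Fin n) (d : Fin n →₀ ℕ),
      PowerSeries.coeff (R := ℂ) p (MvPowerSeries.coeff d (e i)) = 0 := by
    intro p
    induction p using Nat.strong_induction_on with
    | _ p ih =>
        intro i d
        rw [h i, coeff_tT_mul]
        cases p with
        | zero => simp
        | succ p' =>
            rw [PowerSeries.coeff_succ_X_mul,
              map_sum (MvPowerSeries.coeff (R := PowerSeries ℂ) d) (fun k => A i k * e k) Finset.univ,
              map_sum (PowerSeries.coeff (R := ℂ) p') _ Finset.univ]
            refine Finset.sum_eq_zero fun k _ => ?_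
            rw [coeff_mul, map_sum (PowerSeries.coeff (R := ℂ) p') _ _]
            refine Finset.sum_eq_zero fun q _ => ?_
            rw [PowerSeries.coeff_mul]
            refine Finset.sum_eq_zero fun ab hab => ?_
            rw [Finset.HasAntidiagonal.mem_antidiagonal] at hab
            rw [ih ab.2 (by omega) k q.2, mul_zero]
  intro i
  apply MvPowerSeries.ext; intro d
  apply PowerSeries.ext; intro p
  rw [key p i d]
  simp

/-- uniqueness vanishing lemma -/
lemma uvanish {Nt : Fin n → PSZT n} {W : PSZT n}
    (hdt : dt W = ∑ i, pd i W * Nt i) (h0 : evalT0 W = 0) : W = 0 := by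
  have key : ∀ p : ℕ, ∀ d : Fin n →₀ ℕ,
      PowerSeries.coeff (R := ℂ) p (MvPowerSeries.coeff d W) = 0 := by
    intro p
    induction p using Nat.strong_induction_on with
    | _ p ih =>
        intro d
        cases p with
        | zero =>
            have h2 := congrArg (MvPowerSeries.coeff (R := ℂ) d) h0
            rw [show MvPowerSeries.coeff (R := ℂ) d (evalT0 W)
              = PowerSeries.constantCoeff (R := ℂ) (MvPowerSeries.coeff d W) from rfl,
              map_zero] at h2
            rw [PowerSeries.coeff_zero_eq_constantCoeff]
            exact h2
        | succ p' =>
            have h2 := congrArg (fun x => PowerSeries.coeff (R := ℂ) p'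
              (MvPowerSeries.coeff (R := PowerSeries ℂ) d x)) hdt
            simp only [dt_coeff, PowerSeries.coeff_derivative] at h2
            have h3 : PowerSeries.coeff (R := ℂ) p'
                (MvPowerSeries.coeff (R := PowerSeries ℂ) d (∑ i, pd i W * Nt i)) = 0 := by
              rw [map_sum (MvPowerSeries.coeff (R := PowerSeries ℂ) d)
                  (fun i => pd i W * Nt i) Finset.univ,
                map_sum (PowerSeries.coeff (R := ℂ) p') _ Finset.univ]
              refine Finset.sum_eq_zero fun k _ => ?_
              rw [coeff_mul, map_sum (PowerSeries.coeff (R := ℂ) p') _ _]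
              refine Finset.sum_eq_zero fun q _ => ?_
              rw [PowerSeries.coeff_mul]
              refine Finset.sum_eq_zero fun ab hab => ?_
              rw [Finset.HasAntidiagonal.mem_antidiagonal] at hab
              rw [pd_coeff, map_nsmul, ih ab.1 (by omega) _, smul_zero, zero_mul]
            rw [h3] at h2
            have h4 : ((p' : ℂ) + 1) ≠ 0 := Nat.cast_add_one_ne_zero p'
            have := mul_eq_zero.1 h2
            rcases this with h5 | h5
            · exact h5
            · exact absurd h5 h4
  apply MvPowerSeries.ext; intro d
  apply PowerSeries.ext; intro p
  rw [key p d]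
  simp

end T

end Aux

open Aux MvPowerSeries

/-- for any `U(z) ∈ ℂ[[z]]`, the unique power series solution of the Cauchy
problem `∂U_t/∂t = ⟨∇U_t, N_t⟩`, `U_{t=0} = U` is `U_t(z) = U(z + tN_t(z))`. -/
theorem stmt11 {n : ℕ} (H : Fin n → MvPowerSeries (Fin n) ℂ) (hH : vordGE 1 H)
    (Nt : Fin n → PSZT n) (hNt : vordGE 1 Nt)
    (hinv : IsInv (fun i => MvPowerSeries.X i - tT * inclZ (H i))
                  (fun i => MvPowerSeries.X i + tT * Nt i))
    (U : MvPowerSeries (Fin n) ℂ) :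
    (dt (sub (inclZ U) fun j => MvPowerSeries.X j + tT * Nt j) =
        ∑ i, pd i (sub (inclZ U) fun j => MvPowerSeries.X j + tT * Nt j) * Nt i ∧
      evalT0 (sub (inclZ U) fun j => MvPowerSeries.X j + tT * Nt j) = U) ∧
    ∀ W : PSZT n, (dt W = ∑ i, pd i W * Nt i ∧ evalT0 W = U) →
      W = sub (inclZ U) fun j => MvPowerSeries.X j + tT * Nt j := by
  classical
  set G : Fin n → PSZT n := fun j => MvPowerSeries.X j + tT * Nt j with hGdef
  have htTC : (tT : PSZT n) = C (σ := Fin n) (R := PowerSeries ℂ) PowerSeries.X := rfl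
  have hGord : vordGE 1 G := by
    intro j d hd
    have hdeg : deg d = 0 := by rw [← deg_eq_sum]; omega
    have hd0 : d = 0 := by
      ext i
      have := apply_le_deg d i
      simp only [Finsupp.coe_zero, Pi.zero_apply]
      omega
    subst hd0
    rw [hGdef]
    simp only
    rw [map_add, coeff_tT_mul]
    rw [coeff_X, if_neg ?_, hNt j 0 (by simp), mul_zero, add_zero]
    intro h
    have := congrArg (fun q => q j) h
    simp [Finsupp.single_eq_same] at this
  have hNeq : ∀ i, Nt i = sub (inclZ (H i)) G := by
    intro i
    have h1 := hinv.1 i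
    simp only at h1
    rw [sub_sub' hGord, sub_X, htTC, sub_C_mul hGord, ← htTC] at h1
    apply tT_cancel
    have h2 : G i = MvPowerSeries.X i + tT * Nt i := rfl
    rw [h2] at h1
    linear_combination h1
  set A : Fin n → Fin n → PSZT n := fun i k => sub (pd k (inclZ (H i))) G with hAdef
  have hdtG : ∀ k, dt (G k) = Nt k + tT * dt (Nt k) := by
    intro k
    show dt (MvPowerSeries.X k + tT * Nt k) = _
    rw [dt_add, dt_X, dt_mul, dt_tT, zero_add, one_mul]
  have hpdG : ∀ j k, pd j (G k) = (if j = k then 1 else 0) + tT * pd j (Nt k) := by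
    intro j k
    show pd j (MvPowerSeries.X k + tT * Nt k) = _
    rw [pd_add, pd_X, htTC, pd_C_mul]
  have hdtN : ∀ i, dt (Nt i) = ∑ k, A i k * dt (G k) := by
    intro i
    conv_lhs => rw [hNeq i]
    rw [dt_chain _ _ hGord, dt_inclZ, sub_zeroF, zero_add]
  have hpdN : ∀ j i, pd j (Nt i) = ∑ k, A i k * pd j (G k) := by
    intro j i
    conv_lhs => rw [hNeq i]
    rw [pd_chain j _ _ hGord]
  have hE : ∀ i, (dt (Nt i) - ∑ j, pd j (Nt i) * Nt j)
      = tT * ∑ k, A i k * (dt (Nt k) - ∑ j, pd j (Nt k) * Nt j) := by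
    intro i
    have h1 : dt (Nt i) = (∑ k, A i k * Nt k) + tT * ∑ k, A i k * dt (Nt k) := by
      rw [hdtN i]
      calc ∑ k, A i k * dt (G k)
          = ∑ k, (A i k * Nt k + tT * (A i k * dt (Nt k))) := by
            refine Finset.sum_congr rfl fun k _ => ?_
            rw [hdtG k]; ring
        _ = _ := by rw [Finset.sum_add_distrib, ← Finset.mul_sum]
    have h2 : ∑ j, pd j (Nt i) * Nt j
        = (∑ k, A i k * Nt k) + tT * ∑ k, A i k * ∑ j, pd j (Nt k) * Nt j := by
      calc ∑ j, pd j (Nt i) * Nt j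
          = ∑ j, ∑ k, ((if j = k then A i k * Nt j else 0)
              + tT * (A i k * (pd j (Nt k) * Nt j))) := by
            refine Finset.sum_congr rfl fun j _ => ?_
            rw [hpdN j i, Finset.sum_mul]
            refine Finset.sum_congr rfl fun k _ => ?_
            rw [hpdG j k]
            split_ifs with hjk
            · ring
            · ring
        _ = (∑ j, ∑ k, if j = k then A i k * Nt j else 0)
              + tT * ∑ j, ∑ k, A i k * (pd j (Nt k) * Nt j) := by
            have hrow : ∀ j : Fin n, (∑ k, ((if j = k then A i k * Nt j else 0)
                + tT * (A i k * (pd j (Nt k) * Nt j))))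
                = (∑ k, if j = k then A i k * Nt j else 0)
                  + tT * ∑ k, A i k * (pd j (Nt k) * Nt j) := by
              intro j
              rw [Finset.sum_add_distrib, ← Finset.mul_sum]
            rw [Finset.sum_congr rfl (fun j _ => hrow j), Finset.sum_add_distrib,
              ← Finset.mul_sum]
        _ = _ := by
            congr 1
            · rw [Finset.sum_comm]
              refine Finset.sum_congr rfl fun k _ => ?_
              rw [Finset.sum_ite_eq' Finset.univ k (fun j => A i k * Nt j)]
              simp
            · congr 1
              rw [Finset.sum_comm]
              refine Finset.sum_congr rfl fun k _ => ?_
              rw [Finset.mul_sum]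
    have h3 : ∑ k, A i k * (dt (Nt k) - ∑ j, pd j (Nt k) * Nt j)
        = ∑ k, A i k * dt (Nt k) - ∑ k, A i k * ∑ j, pd j (Nt k) * Nt j := by
      rw [← Finset.sum_sub_distrib]
      refine Finset.sum_congr rfl fun k _ => ?_
      rw [mul_sub]
    rw [h1, h2, h3, mul_sub]
    ring
  have hNpde : ∀ k, dt (Nt k) = ∑ j, pd j (Nt k) * Nt j := by
    intro k
    have := tvanish (e := fun i => dt (Nt i) - ∑ j, pd j (Nt i) * Nt j) (A := A) hE k
    rw [sub_eq_zero] at this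
    exact this
  have key : ∀ k, dt (G k) = ∑ i, pd i (G k) * Nt i := by
    intro k
    have hstep : ∑ i, pd i (G k) * Nt i = Nt k + tT * ∑ j, pd j (Nt k) * Nt j := by
      calc ∑ i, pd i (G k) * Nt i
          = ∑ i, ((if i = k then Nt i else 0) + tT * (pd i (Nt k) * Nt i)) := by
            refine Finset.sum_congr rfl fun i _ => ?_
            rw [hpdG i k]
            split_ifs with hik
            · ring
            · ring
        _ = (∑ i, if i = k then Nt i else 0) + tT * ∑ i, pd i (Nt k) * Nt i := by
            rw [Finset.sum_add_distrib, ← Finset.mul_sum]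
        _ = Nt k + tT * ∑ j, pd j (Nt k) * Nt j := by
            congr 1
            rw [Finset.sum_ite_eq' Finset.univ k (fun i => Nt i)]
            simp
    rw [hdtG k, hNpde k, hstep]
  have hdtV : dt (sub (inclZ U) G) = ∑ i, pd i (sub (inclZ U) G) * Nt i := by
    rw [dt_chain _ _ hGord, dt_inclZ, sub_zeroF, zero_add]
    calc ∑ k, sub (pd k (inclZ U)) G * dt (G k)
        = ∑ k, ∑ i, sub (pd k (inclZ U)) G * (pd i (G k) * Nt i) := by
          refine Finset.sum_congr rfl fun k _ => ?_
          rw [key k, Finset.mul_sum]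
      _ = ∑ i, (∑ k, sub (pd k (inclZ U)) G * pd i (G k)) * Nt i := by
          rw [Finset.sum_comm]
          refine Finset.sum_congr rfl fun i _ => ?_
          rw [Finset.sum_mul]
          refine Finset.sum_congr rfl fun k _ => ?_
          ring
      _ = ∑ i, pd i (sub (inclZ U) G) * Nt i := by
          refine Finset.sum_congr rfl fun i _ => ?_
          rw [pd_chain i _ _ hGord]
  have hev : evalT0 (sub (inclZ U) G) = U := by
    apply MvPowerSeries.ext; intro m
    rw [show MvPowerSeries.coeff (R := ℂ) m (evalT0 (sub (inclZ U) G))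
      = PowerSeries.constantCoeff (R := ℂ) (MvPowerSeries.coeff m (sub (inclZ U) G)) from rfl]
    rw [coeff_sub_eq_sum hGord (inclZ U) (le_refl (deg m)), map_sum]
    have hterm : ∀ d : Fin n →₀ ℕ,
        PowerSeries.constantCoeff (R := ℂ) (MvPowerSeries.coeff d (inclZ U)
            * MvPowerSeries.coeff m (∏ i, G i ^ d i))
        = MvPowerSeries.coeff (R := ℂ) d U * (if m = d then 1 else 0) := by
      intro d
      rw [map_mul, coeff_inclZ, PowerSeries.constantCoeff_C]
      congr 1
      have hGX : ∀ i, evalT0 (G i) = MvPowerSeries.X i := by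
        intro i
        show evalT0 (MvPowerSeries.X i + tT * Nt i) = _
        rw [map_add, evalT0_X, map_mul, evalT0_tT, zero_mul, add_zero]
      have hP : evalT0 (∏ i, G i ^ d i) = monomial (R := ℂ) d 1 := by
        rw [map_prod]
        have : ∀ i, evalT0 (G i ^ d i) = MvPowerSeries.X i ^ d i := by
          intro i; rw [map_pow, hGX i]
        rw [Finset.prod_congr rfl (fun i _ => this i), prod_X_pow]
      calc PowerSeries.constantCoeff (R := ℂ) (MvPowerSeries.coeff m (∏ i, G i ^ d i))
          = MvPowerSeries.coeff (R := ℂ) m (evalT0 (∏ i, G i ^ d i)) := rfl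
        _ = (if m = d then 1 else 0) := by rw [hP, coeff_monomial]
    rw [Finset.sum_congr rfl (fun d _ => hterm d)]
    rw [Finset.sum_eq_single_of_mem m (mem_Iic_unif (le_refl (deg m)))]
    · rw [if_pos rfl, mul_one]
    · intro b _ hb
      rw [if_neg (fun h => hb h.symm), mul_zero]
  refine ⟨⟨hdtV, hev⟩, ?_⟩
  intro W hW
  obtain ⟨hW1, hW2⟩ := hW
  have hsub : W - sub (inclZ U) G = 0 := by
    apply uvanish (Nt := Nt)
    · rw [dt_sub', hW1, hdtV, ← Finset.sum_sub_distrib]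
      refine Finset.sum_congr rfl fun i _ => ?_
      rw [pd_subF, sub_mul]
    · rw [map_sub, hW2, hev, sub_self]
  rw [sub_eq_zero] at hsub
  exact hsub
end
end

section
/- Let N_t(z) ∈ ℂ[t][[z]]^{×n} with order at least 1 in z. Then the following are equivalent: (1) z + tN_t(z) is the formal compositional inverse of z − tH(z) for some H ∈ ℂ[[z]]^{×n}; (2) for every U(z) ∈ ℂ[[z]], the series U_t(z) = U(z + tN_t(z)) is the unique power series solution of the Cauchy problem ∂U_t/∂t = ⟨∇U_t, N_t⟩, U_{t=0}(z) = U(z). -/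
/-
Common setup: `ℂ[[z]]` is `MvPowerSeries (Fin n) ℂ`; `ℂ[[z,t]]` is realized as
`MvPowerSeries (Fin n) (PowerSeries ℂ)` (power series in `z` with coefficients in `ℂ[[t]]`),
and `ℂ[t][[z]]` as `MvPowerSeries (Fin n) (Polynomial ℂ)`.  Substitution, partial
derivatives, Jacobian matrices, order and compositional inverses are defined below.
-/

noncomputable section

namespace ZZ

open MvPowerSeries

variable {n : ℕ} {R : Type*}

@[simp] lemma coeff_PSmk [CommSemiring R] (f : (Fin n →₀ ℕ) → R) (d : Fin n →₀ ℕ) :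
    MvPowerSeries.coeff (R := R) d (PSmk f) = f d := rfl

/-- total degree of an exponent -/
def dg (d : Fin n →₀ ℕ) : ℕ := d.sum fun _ e => e

lemma dg_eq_sum (d : Fin n →₀ ℕ) : dg d = ∑ i, d i :=
  Finsupp.sum_fintype _ _ (fun _ => rfl)

lemma le_dg (d : Fin n →₀ ℕ) (i : Fin n) : d i ≤ dg d := by
  rw [dg_eq_sum]
  exact Finset.single_le_sum (fun _ _ => Nat.zero_le _) (Finset.mem_univ i)

lemma dg_add (a b : Fin n →₀ ℕ) : dg (a + b) = dg a + dg b := by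
  simp [dg_eq_sum, Finsupp.add_apply, Finset.sum_add_distrib]

lemma dg_single (i : Fin n) (k : ℕ) : dg (Finsupp.single i k) = k := by
  simp [dg, Finsupp.sum_single_index]

-- ordGE lemmas
lemma ordGE_mono [CommSemiring R] {k l : ℕ} {f : MvPowerSeries (Fin n) R} (h : l ≤ k)
    (hf : ordGE k f) : ordGE l f := fun d hd => hf d (lt_of_lt_of_le hd h)

lemma ordGE_coeff [CommSemiring R] {k : ℕ} {f : MvPowerSeries (Fin n) R} (hf : ordGE k f)
    {d : Fin n →₀ ℕ} (hd : dg d < k) : MvPowerSeries.coeff (R := R) d f = 0 := hf d hd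

lemma ordGE_mul [CommSemiring R] {k l : ℕ} {f g : MvPowerSeries (Fin n) R}
    (hf : ordGE k f) (hg : ordGE l g) : ordGE (k + l) (f * g) := by
  intro d hd
  classical
  rw [MvPowerSeries.coeff_mul]
  apply Finset.sum_eq_zero
  intro p hp
  have hsum : p.1 + p.2 = d := Finset.HasAntidiagonal.mem_antidiagonal.mp hp
  have : dg p.1 + dg p.2 < k + l := by rw [← dg_add, hsum]; exact hd
  rcases lt_or_ge (dg p.1) k with h | h
  · rw [ordGE_coeff hf h, zero_mul]
  · have : dg p.2 < l := by omega
    rw [ordGE_coeff hg this, mul_zero]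

lemma ordGE_zero [CommSemiring R] (f : MvPowerSeries (Fin n) R) : ordGE 0 f :=
  fun _ hd => absurd hd (Nat.not_lt_zero _)

lemma ordGE_pow [CommSemiring R] {a : MvPowerSeries (Fin n) R} (ha : ordGE 1 a) (k : ℕ) :
    ordGE k (a ^ k) := by
  induction k with
  | zero => exact ordGE_zero _
  | succ m ih => rw [pow_succ]; exact ordGE_mul ih ha

lemma ordGE_prod [CommSemiring R] {a : Fin n → MvPowerSeries (Fin n) R}
    (ha : vordGE 1 a) (d : Fin n →₀ ℕ) : ordGE (dg d) (∏ i, a i ^ d i) := by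
  rw [dg_eq_sum]
  classical
  have : ∀ s : Finset (Fin n), ordGE (∑ i ∈ s, d i) (∏ i ∈ s, a i ^ d i) := by
    intro s
    induction s using Finset.induction with
    | empty => simpa using ordGE_zero (1 : MvPowerSeries (Fin n) R)
    | insert _ _ hnot ih =>
        rw [Finset.sum_insert hnot, Finset.prod_insert hnot]
        exact ordGE_mul (ordGE_pow (ha _) _) ih
  exact this Finset.univ

lemma coeff_prod_eq_zero [CommSemiring R] {a : Fin n → MvPowerSeries (Fin n) R}
    (ha : vordGE 1 a) {m d : Fin n →₀ ℕ} (h : dg m < dg d) :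
    MvPowerSeries.coeff (R := R) m (∏ i, a i ^ d i) = 0 :=
  ordGE_coeff (ordGE_prod ha d) h

/-- canonical finite box of exponents -/
def Dk (k : ℕ) : Finset (Fin n →₀ ℕ) := Finset.Iic (Finsupp.equivFunOnFinite.symm fun _ => k)

lemma mem_Dk {k : ℕ} {d : Fin n →₀ ℕ} (h : dg d ≤ k) : d ∈ Dk k := by
  rw [Dk, Finset.mem_Iic, Finsupp.le_def]
  intro i
  exact le_trans (le_dg d i) h

lemma coeff_sub [CommRing R] {a : Fin n → MvPowerSeries (Fin n) R} (ha : vordGE 1 a)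
    (f : MvPowerSeries (Fin n) R) (m : Fin n →₀ ℕ) :
    MvPowerSeries.coeff (R := R) m (sub f a) =
      ∑ d ∈ Dk (dg m), MvPowerSeries.coeff (R := R) d f *
        MvPowerSeries.coeff (R := R) m (∏ i, a i ^ d i) := by
  rw [sub, coeff_PSmk]
  apply finsum_eq_sum_of_support_subset
  intro d hd
  simp only [Function.mem_support] at hd
  by_contra hmem
  have hgt : dg m < dg d := by
    by_contra hle
    exact hmem (Finset.mem_coe.mpr (mem_Dk (not_lt.mp hle)))
  exact hd (by rw [coeff_prod_eq_zero ha hgt, mul_zero])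

lemma sub_add [CommRing R] {a : Fin n → MvPowerSeries (Fin n) R} (ha : vordGE 1 a)
    (f g : MvPowerSeries (Fin n) R) : sub (f + g) a = sub f a + sub g a := by
  ext m
  rw [map_add, coeff_sub ha, coeff_sub ha, coeff_sub ha, ← Finset.sum_add_distrib]
  apply Finset.sum_congr rfl
  intro d _
  rw [map_add, add_mul]

lemma sub_zero' [CommRing R] (a : Fin n → MvPowerSeries (Fin n) R) : sub 0 a = 0 := by
  ext m
  rw [sub, coeff_PSmk]
  simp

lemma sub_monomial [CommRing R] (a : Fin n → MvPowerSeries (Fin n) R) (d : Fin n →₀ ℕ) (c : R) :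
    sub (MvPowerSeries.monomial (R := R) d c) a = MvPowerSeries.C (σ := Fin n) (R := R) c * ∏ i, a i ^ d i := by
  classical
  ext m
  rw [sub, coeff_PSmk]
  rw [finsum_eq_single _ d (fun e he => by rw [MvPowerSeries.coeff_monomial_ne he, zero_mul])]
  rw [MvPowerSeries.coeff_monomial_same]
  rw [← MvPowerSeries.smul_eq_C_mul, MvPowerSeries.coeff_smul]

end ZZ
namespace ZZ

open MvPowerSeries

variable {n : ℕ} {R : Type*}

lemma sub_C [CommRing R] (a : Fin n → MvPowerSeries (Fin n) R) (c : R) :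
    sub (MvPowerSeries.C (σ := Fin n) (R := R) c) a = MvPowerSeries.C (σ := Fin n) (R := R) c := by
  have : (MvPowerSeries.C (σ := Fin n) (R := R) c) = MvPowerSeries.monomial (R := R) 0 c := by
    rw [MvPowerSeries.monomial_zero_eq_C]
  rw [this, sub_monomial]
  simp [MvPowerSeries.monomial_zero_eq_C]

lemma sub_one [CommRing R] (a : Fin n → MvPowerSeries (Fin n) R) :
    sub 1 a = 1 := by
  have h1 : (1 : MvPowerSeries (Fin n) R) = MvPowerSeries.C (σ := Fin n) (R := R) 1 := by simp
  rw [h1, sub_C]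

lemma sub_X [CommRing R] (a : Fin n → MvPowerSeries (Fin n) R) (i : Fin n) :
    sub (MvPowerSeries.X i) a = a i := by
  classical
  rw [MvPowerSeries.X_def, sub_monomial]
  rw [Finset.prod_eq_single i (fun j _ hj => by
        rw [Finsupp.single_apply, if_neg (Ne.symm hj), pow_zero]) (by simp)]
  simp [Finsupp.single_apply]

lemma sub_sum [CommRing R] {a : Fin n → MvPowerSeries (Fin n) R} (ha : vordGE 1 a)
    {ι : Type*} (s : Finset ι) (F : ι → MvPowerSeries (Fin n) R) :
    sub (∑ i ∈ s, F i) a = ∑ i ∈ s, sub (F i) a := by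
  classical
  induction s using Finset.induction with
  | empty => simpa using sub_zero' a
  | insert _ _ hnot ih => rw [Finset.sum_insert hnot, Finset.sum_insert hnot, sub_add ha, ih]

lemma sub_sub_eq [CommRing R] {a : Fin n → MvPowerSeries (Fin n) R} (ha : vordGE 1 a)
    (f g : MvPowerSeries (Fin n) R) : sub (f - g) a = sub f a - sub g a := by
  have h := sub_add ha (f - g) g
  rw [sub_add_cancel] at h
  rw [h]; ring

lemma ordGE_sub_of [CommRing R] {a : Fin n → MvPowerSeries (Fin n) R} (ha : vordGE 1 a)
    {k : ℕ} {f : MvPowerSeries (Fin n) R} (hf : ordGE k f) : ordGE k (sub f a) := by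
  intro m hm
  rw [coeff_sub ha]
  apply Finset.sum_eq_zero
  intro d _
  rcases lt_or_ge (dg m) (dg d) with h | h
  · rw [coeff_prod_eq_zero ha h, mul_zero]
  · rw [ordGE_coeff hf (lt_of_le_of_lt h hm), zero_mul]

/-- truncation below total degree `k` -/
def truncd [CommSemiring R] (k : ℕ) (f : MvPowerSeries (Fin n) R) : MvPowerSeries (Fin n) R :=
  ∑ d ∈ (Dk k).filter (fun d => dg d < k), MvPowerSeries.monomial (R := R) d (MvPowerSeries.coeff (R := R) d f)

lemma coeff_truncd [CommSemiring R] (k : ℕ) (f : MvPowerSeries (Fin n) R) (e : Fin n →₀ ℕ) :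
    MvPowerSeries.coeff (R := R) e (truncd k f) =
      if dg e < k then MvPowerSeries.coeff (R := R) e f else 0 := by
  classical
  rw [truncd, map_sum]
  simp only [MvPowerSeries.coeff_monomial]
  rw [Finset.sum_ite_eq ((Dk k).filter (fun d => dg d < k)) e
    (fun d => MvPowerSeries.coeff (R := R) d f)]
  by_cases h : dg e < k
  · have hmem : e ∈ (Dk k).filter (fun d => dg d < k) :=
      Finset.mem_filter.mpr ⟨mem_Dk (le_of_lt h), h⟩
    rw [if_pos hmem, if_pos h]
  · have hnm : e ∉ (Dk k).filter (fun d => dg d < k) :=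
      fun hmem => h (Finset.mem_filter.mp hmem).2
    rw [if_neg hnm, if_neg h]

lemma ordGE_truncd_rem [CommRing R] (k : ℕ) (f : MvPowerSeries (Fin n) R) :
    ordGE k (f - truncd k f) := by
  intro d hd
  rw [map_sub, coeff_truncd, if_pos (show dg d < k from hd), sub_self]

/-- polynomial (sums of monomials) case of multiplicativity -/
lemma sub_mul_aux [CommRing R] {a : Fin n → MvPowerSeries (Fin n) R} (ha : vordGE 1 a)
    (s₁ s₂ : Finset (Fin n →₀ ℕ)) (p q : (Fin n →₀ ℕ) → R) :
    sub ((∑ d ∈ s₁, MvPowerSeries.monomial (R := R) d (p d)) *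
         (∑ e ∈ s₂, MvPowerSeries.monomial (R := R) e (q e))) a =
      sub (∑ d ∈ s₁, MvPowerSeries.monomial (R := R) d (p d)) a *
        sub (∑ e ∈ s₂, MvPowerSeries.monomial (R := R) e (q e)) a := by
  rw [Finset.sum_mul_sum, sub_sum ha]
  have hstep : ∀ d ∈ s₁,
      sub (∑ e ∈ s₂, MvPowerSeries.monomial (R := R) d (p d) * MvPowerSeries.monomial (R := R) e (q e)) a =
        ∑ e ∈ s₂, sub (MvPowerSeries.monomial (R := R) d (p d)) a *
          sub (MvPowerSeries.monomial (R := R) e (q e)) a := by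
    intro d _
    rw [sub_sum ha]
    refine Finset.sum_congr rfl (fun e _ => ?_)
    rw [MvPowerSeries.monomial_mul_monomial, sub_monomial, sub_monomial, sub_monomial, map_mul]
    have hprod : (∏ i, a i ^ (d + e) i) = (∏ i, a i ^ d i) * (∏ i, a i ^ e i) := by
      rw [← Finset.prod_mul_distrib]
      apply Finset.prod_congr rfl
      intro i _
      rw [Finsupp.add_apply, pow_add]
    rw [hprod]; ring
  rw [Finset.sum_congr rfl hstep, ← Finset.sum_mul_sum, sub_sum ha, sub_sum ha]

lemma truncd_eq_sum [CommSemiring R] (k : ℕ) (f : MvPowerSeries (Fin n) R) :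
    truncd k f = ∑ d ∈ (Dk k).filter (fun d => dg d < k),
      MvPowerSeries.monomial (R := R) d (MvPowerSeries.coeff (R := R) d f) := rfl

lemma sub_mul [CommRing R] {a : Fin n → MvPowerSeries (Fin n) R} (ha : vordGE 1 a)
    (f g : MvPowerSeries (Fin n) R) : sub (f * g) a = sub f a * sub g a := by
  ext m
  set k := dg m + 1 with hk
  set P := truncd k f with hP
  set Q := truncd k g with hQ
  have hr : ordGE k (f - P) := ordGE_truncd_rem k f
  have hs : ordGE k (g - Q) := ordGE_truncd_rem k g
  have hm : dg m < k := Nat.lt_succ_self _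
  have key : ∀ u v : MvPowerSeries (Fin n) R, ordGE k u →
      MvPowerSeries.coeff (R := R) m (u * v) = 0 := fun u v hu =>
    ordGE_coeff (by simpa using ordGE_mul hu (ordGE_zero v)) hm
  have key' : ∀ u v : MvPowerSeries (Fin n) R, ordGE k v →
      MvPowerSeries.coeff (R := R) m (u * v) = 0 := fun u v hv =>
    ordGE_coeff (by simpa using ordGE_mul (ordGE_zero u) hv) hm
  have hfg : f * g = P * Q + ((f - P) * g + P * (g - Q)) := by ring
  have hL : MvPowerSeries.coeff (R := R) m (sub (f * g) a) =
      MvPowerSeries.coeff (R := R) m (sub (P * Q) a) := by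
    rw [hfg, sub_add ha, sub_add ha, map_add, map_add]
    have h1 : ordGE k ((f - P) * g) := by simpa using ordGE_mul hr (ordGE_zero g)
    have h2 : ordGE k (P * (g - Q)) := by simpa using ordGE_mul (ordGE_zero P) hs
    rw [ordGE_coeff (ordGE_sub_of ha h1) hm, ordGE_coeff (ordGE_sub_of ha h2) hm]
    ring
  have hR : MvPowerSeries.coeff (R := R) m (sub f a * sub g a) =
      MvPowerSeries.coeff (R := R) m (sub P a * sub Q a) := by
    have hfPQ : sub f a * sub g a = sub P a * sub Q a +
        (sub (f - P) a * sub g a + sub P a * sub (g - Q) a) := by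
      rw [sub_sub_eq ha, sub_sub_eq ha]; ring
    rw [hfPQ, map_add, map_add]
    rw [key _ _ (ordGE_sub_of ha hr), key' _ _ (ordGE_sub_of ha hs)]
    ring
  rw [hL, hR, hP, hQ, truncd_eq_sum, truncd_eq_sum, sub_mul_aux ha]

lemma sub_pow [CommRing R] {a : Fin n → MvPowerSeries (Fin n) R} (ha : vordGE 1 a)
    (f : MvPowerSeries (Fin n) R) (k : ℕ) : sub (f ^ k) a = sub f a ^ k := by
  induction k with
  | zero => simpa using sub_one a
  | succ m ih => rw [pow_succ, pow_succ, sub_mul ha, ih]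

lemma sub_prod [CommRing R] {a : Fin n → MvPowerSeries (Fin n) R} (ha : vordGE 1 a)
    {ι : Type*} (s : Finset ι) (F : ι → MvPowerSeries (Fin n) R) :
    sub (∏ i ∈ s, F i) a = ∏ i ∈ s, sub (F i) a := by
  classical
  induction s using Finset.induction with
  | empty => simpa using sub_one a
  | insert _ _ hnot ih => rw [Finset.prod_insert hnot, Finset.prod_insert hnot, sub_mul ha, ih]

end ZZ
namespace ZZ

open MvPowerSeries

variable {n : ℕ} {R : Type*}

lemma dg_eq_zero {d : Fin n →₀ ℕ} (h : dg d = 0) : d = 0 := by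
  rw [dg_eq_sum] at h
  ext i
  have := Finset.sum_eq_zero_iff.mp h i (Finset.mem_univ i)
  simpa using this

lemma vordGE_comp [CommRing R] {a b : Fin n → MvPowerSeries (Fin n) R}
    (ha : vordGE 1 a) (hb : vordGE 1 b) : vordGE 1 (fun i => sub (a i) b) :=
  fun i => ordGE_sub_of hb (ha i)

lemma sub_assoc [CommRing R] {a b : Fin n → MvPowerSeries (Fin n) R}
    (ha : vordGE 1 a) (hb : vordGE 1 b) (f : MvPowerSeries (Fin n) R) :
    sub (sub f a) b = sub f (fun i => sub (a i) b) := by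
  have hab : vordGE 1 (fun i => sub (a i) b) := vordGE_comp ha hb
  ext m
  set k := dg m + 1 with hk
  set P := truncd k f with hPdef
  have hr : ordGE k (f - P) := ordGE_truncd_rem k f
  have hm : dg m < k := Nat.lt_succ_self _
  have hsplit : f = P + (f - P) := by ring
  have hL : MvPowerSeries.coeff (R := R) m (sub (sub f a) b) =
      MvPowerSeries.coeff (R := R) m (sub (sub P a) b) := by
    conv_lhs => rw [hsplit]
    rw [sub_add ha, sub_add hb, map_add,
      ordGE_coeff (ordGE_sub_of hb (ordGE_sub_of ha hr)) hm, add_zero]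
  have hR : MvPowerSeries.coeff (R := R) m (sub f (fun i => sub (a i) b)) =
      MvPowerSeries.coeff (R := R) m (sub P (fun i => sub (a i) b)) := by
    conv_lhs => rw [hsplit]
    rw [sub_add hab, map_add, ordGE_coeff (ordGE_sub_of hab hr) hm, add_zero]
  rw [hL, hR]
  have hpoly : sub (sub P a) b = sub P (fun i => sub (a i) b) := by
    rw [hPdef, truncd_eq_sum, sub_sum ha, sub_sum hb, sub_sum hab]
    apply Finset.sum_congr rfl
    intro d _
    rw [sub_monomial, sub_monomial, sub_mul hb, sub_C, sub_prod hb]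
    congr 1
    apply Finset.prod_congr rfl
    intro i _
    rw [sub_pow hb]
  rw [hpoly]

lemma prod_monomial_one [CommSemiring R] {ι : Type*} (s : Finset ι) (g : ι → (Fin n →₀ ℕ)) :
    (∏ i ∈ s, MvPowerSeries.monomial (R := R) (g i) 1) =
      MvPowerSeries.monomial (R := R) (∑ i ∈ s, g i) 1 := by
  classical
  induction s using Finset.induction with
  | empty => simp [MvPowerSeries.monomial_zero_eq_C]
  | insert _ _ hnot ih =>
      rw [Finset.prod_insert hnot, Finset.sum_insert hnot, ih,
        MvPowerSeries.monomial_mul_monomial, one_mul]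

lemma prod_X_pow [CommSemiring R] (d : Fin n →₀ ℕ) :
    (∏ i, (MvPowerSeries.X i : MvPowerSeries (Fin n) R) ^ d i) =
      MvPowerSeries.monomial (R := R) d 1 := by
  have h1 : ∀ i : Fin n, (MvPowerSeries.X i : MvPowerSeries (Fin n) R) ^ d i =
      MvPowerSeries.monomial (R := R) (Finsupp.single i (d i)) 1 := fun i =>
    MvPowerSeries.X_pow_eq i (d i)
  have hsum : (∑ i, Finsupp.single i (d i)) = d := by
    rw [← Finsupp.sum_fintype d Finsupp.single (fun i => Finsupp.single_zero i)]
    exact Finsupp.sum_single d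
  rw [Finset.prod_congr rfl (fun i _ => h1 i), prod_monomial_one, hsum]

lemma vordGE_X [CommSemiring R] :
    vordGE 1 (fun i => (MvPowerSeries.X i : MvPowerSeries (Fin n) R)) := by
  intro i d hd
  have hd0 : d = 0 := dg_eq_zero (Nat.lt_one_iff.mp hd)
  rw [hd0]
  show MvPowerSeries.coeff (R := R) 0 (MvPowerSeries.X i : MvPowerSeries (Fin n) R) = 0
  rw [MvPowerSeries.X_def]
  exact MvPowerSeries.coeff_monomial_ne (by
    intro h
    have := congrArg (fun e => e i) h
    simp [Finsupp.single_apply] at this) 1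

lemma sub_X_family [CommRing R] (f : MvPowerSeries (Fin n) R) :
    sub f (fun i => MvPowerSeries.X i) = f := by
  classical
  ext m
  rw [coeff_sub vordGE_X]
  have : ∀ d ∈ Dk (dg m), MvPowerSeries.coeff (R := R) d f *
      MvPowerSeries.coeff (R := R) m (∏ i, (MvPowerSeries.X i : MvPowerSeries (Fin n) R) ^ d i) =
      if m = d then MvPowerSeries.coeff (R := R) d f else 0 := by
    intro d _
    rw [prod_X_pow, MvPowerSeries.coeff_monomial]
    by_cases h : m = d
    · rw [if_pos h, if_pos h, mul_one]
    · rw [if_neg h, if_neg h, mul_zero]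
  rw [Finset.sum_congr rfl this, Finset.sum_ite_eq (Dk (dg m)) m, if_pos (mem_Dk le_rfl)]

end ZZ
namespace ZZ

open MvPowerSeries

variable {n : ℕ} {R : Type*}

lemma coeff_pd [CommSemiring R] (i : Fin n) (f : MvPowerSeries (Fin n) R) (e : Fin n →₀ ℕ) :
    MvPowerSeries.coeff (R := R) e (pd i f) =
      (e i + 1) • MvPowerSeries.coeff (R := R) (e + Finsupp.single i 1) f := rfl

lemma pd_add [CommSemiring R] (i : Fin n) (f g : MvPowerSeries (Fin n) R) :
    pd i (f + g) = pd i f + pd i g := by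
  ext e
  rw [map_add, coeff_pd, coeff_pd, coeff_pd, map_add, smul_add]

lemma pd_zero [CommSemiring R] (i : Fin n) : pd i (0 : MvPowerSeries (Fin n) R) = 0 := by
  ext e
  rw [coeff_pd]
  simp

lemma pd_sum [CommSemiring R] (i : Fin n) {ι : Type*} (s : Finset ι)
    (F : ι → MvPowerSeries (Fin n) R) :
    pd i (∑ j ∈ s, F j) = ∑ j ∈ s, pd i (F j) := by
  classical
  induction s using Finset.induction with
  | empty => simpa using pd_zero i
  | insert _ _ hnot ih => rw [Finset.sum_insert hnot, Finset.sum_insert hnot, pd_add, ih]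

lemma pd_monomial [CommSemiring R] (i : Fin n) (d : Fin n →₀ ℕ) (c : R) :
    pd i (MvPowerSeries.monomial (R := R) d c) =
      MvPowerSeries.monomial (R := R) (d - Finsupp.single i 1) (d i • c) := by
  classical
  ext e
  rw [coeff_pd, MvPowerSeries.coeff_monomial, MvPowerSeries.coeff_monomial]
  by_cases h : e + Finsupp.single i 1 = d
  · have hdi : d i = e i + 1 := by
      rw [← h, Finsupp.add_apply, Finsupp.single_apply, if_pos rfl]
    have he : e = d - Finsupp.single i 1 := by
      rw [← h, add_tsub_cancel_right]
    rw [if_pos h, if_pos he, hdi]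
  · rw [if_neg h]
    by_cases h2 : e = d - Finsupp.single i 1
    · have hdi : d i = 0 := by
        by_contra hdi
        apply h
        rw [h2, tsub_add_cancel_of_le]
        rw [Finsupp.single_le_iff]
        omega
      rw [if_pos h2, hdi, zero_smul, smul_zero]
    · rw [if_neg h2, smul_zero]

lemma pd_C [CommSemiring R] (i : Fin n) (c : R) :
    pd i (MvPowerSeries.C (σ := Fin n) (R := R) c) = 0 := by
  rw [← MvPowerSeries.monomial_zero_eq_C]
  show pd i (MvPowerSeries.monomial (R := R) 0 c) = 0
  rw [pd_monomial]
  simp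

lemma pd_one [CommSemiring R] (i : Fin n) : pd i (1 : MvPowerSeries (Fin n) R) = 0 := by
  have : (1 : MvPowerSeries (Fin n) R) = MvPowerSeries.C (σ := Fin n) (R := R) 1 := by simp
  rw [this, pd_C]

lemma pd_X [CommSemiring R] (j i : Fin n) :
    pd j (MvPowerSeries.X i : MvPowerSeries (Fin n) R) =
      if j = i then 1 else 0 := by
  rw [MvPowerSeries.X_def, pd_monomial]
  by_cases h : j = i
  · subst h
    simp [MvPowerSeries.monomial_zero_eq_C]
  · rw [Finsupp.single_apply, if_neg (fun he => h he.symm), zero_smul, map_zero, if_neg h]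

lemma ordGE_pd [CommSemiring R] {k : ℕ} {f : MvPowerSeries (Fin n) R} (hf : ordGE (k + 1) f)
    (i : Fin n) : ordGE k (pd i f) := by
  intro d hd
  have hd' : dg d < k := hd
  rw [coeff_pd, ordGE_coeff hf (by rw [dg_add, dg_single]; omega), smul_zero]

/-- monomial case of the Leibniz rule -/
lemma pd_mul_monomial [CommRing R] (i : Fin n) (d e : Fin n →₀ ℕ) (c c' : R) :
    pd i (MvPowerSeries.monomial (R := R) d c * MvPowerSeries.monomial (R := R) e c') =
      pd i (MvPowerSeries.monomial (R := R) d c) * MvPowerSeries.monomial (R := R) e c' +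
        MvPowerSeries.monomial (R := R) d c * pd i (MvPowerSeries.monomial (R := R) e c') := by
  classical
  rw [MvPowerSeries.monomial_mul_monomial, pd_monomial, pd_monomial, pd_monomial,
    MvPowerSeries.monomial_mul_monomial, MvPowerSeries.monomial_mul_monomial]
  have hadd : (d + e) i = d i + e i := rfl
  have key1 : MvPowerSeries.monomial (R := R) (d + e - Finsupp.single i 1) (d i • (c * c')) =
      MvPowerSeries.monomial (R := R) (d - Finsupp.single i 1 + e) (d i • (c * c')) := by
    rcases Nat.eq_zero_or_pos (d i) with h | h
    · rw [h, zero_smul, map_zero, map_zero]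
    · have hexp : d + e - Finsupp.single i 1 = d - Finsupp.single i 1 + e := by
        ext j
        simp only [Finsupp.tsub_apply, Finsupp.add_apply, Finsupp.single_apply]
        by_cases hji : i = j
        · subst hji; simp only [if_pos rfl, if_true, eq_self_iff_true]; omega
        · simp only [if_neg hji]; omega
      rw [hexp]
  have key2 : MvPowerSeries.monomial (R := R) (d + e - Finsupp.single i 1) (e i • (c * c')) =
      MvPowerSeries.monomial (R := R) (d + (e - Finsupp.single i 1)) (e i • (c * c')) := by
    rcases Nat.eq_zero_or_pos (e i) with h | h
    · rw [h, zero_smul, map_zero, map_zero]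
    · have hexp : d + e - Finsupp.single i 1 = d + (e - Finsupp.single i 1) := by
        ext j
        simp only [Finsupp.tsub_apply, Finsupp.add_apply, Finsupp.single_apply]
        by_cases hji : i = j
        · subst hji; simp only [if_pos rfl, if_true, eq_self_iff_true]; omega
        · simp only [if_neg hji]; omega
      rw [hexp]
  have hsm : (d + e) i • (c * c') = d i • (c * c') + e i • (c * c') := by
    rw [hadd, add_smul]
  rw [hsm, map_add, key1, key2]
  congr 2
  · rw [smul_mul_assoc]
  · rw [mul_smul_comm]

lemma pd_mul_aux [CommRing R] (i : Fin n) (s₁ s₂ : Finset (Fin n →₀ ℕ))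
    (p q : (Fin n →₀ ℕ) → R) :
    pd i ((∑ d ∈ s₁, MvPowerSeries.monomial (R := R) d (p d)) *
          (∑ e ∈ s₂, MvPowerSeries.monomial (R := R) e (q e))) =
      pd i (∑ d ∈ s₁, MvPowerSeries.monomial (R := R) d (p d)) *
          (∑ e ∈ s₂, MvPowerSeries.monomial (R := R) e (q e)) +
        (∑ d ∈ s₁, MvPowerSeries.monomial (R := R) d (p d)) *
          pd i (∑ e ∈ s₂, MvPowerSeries.monomial (R := R) e (q e)) := by
  have hstep : ∀ d ∈ s₁,
      pd i (∑ e ∈ s₂, MvPowerSeries.monomial (R := R) d (p d) * MvPowerSeries.monomial (R := R) e (q e)) =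
        ∑ e ∈ s₂, (pd i (MvPowerSeries.monomial (R := R) d (p d)) * MvPowerSeries.monomial (R := R) e (q e) +
          MvPowerSeries.monomial (R := R) d (p d) * pd i (MvPowerSeries.monomial (R := R) e (q e))) := by
    intro d _
    rw [pd_sum]
    exact Finset.sum_congr rfl (fun e _ => pd_mul_monomial i d e (p d) (q e))
  have lhs_eq : pd i ((∑ d ∈ s₁, MvPowerSeries.monomial (R := R) d (p d)) *
      (∑ e ∈ s₂, MvPowerSeries.monomial (R := R) e (q e))) =
      ∑ d ∈ s₁, ∑ e ∈ s₂,
        (pd i (MvPowerSeries.monomial (R := R) d (p d)) * MvPowerSeries.monomial (R := R) e (q e) +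
          MvPowerSeries.monomial (R := R) d (p d) * pd i (MvPowerSeries.monomial (R := R) e (q e))) := by
    rw [Finset.sum_mul_sum, pd_sum]
    exact Finset.sum_congr rfl hstep
  rw [lhs_eq]
  have h1 : ∀ d ∈ s₁,
      (∑ e ∈ s₂, (pd i (MvPowerSeries.monomial (R := R) d (p d)) * MvPowerSeries.monomial (R := R) e (q e) +
        MvPowerSeries.monomial (R := R) d (p d) * pd i (MvPowerSeries.monomial (R := R) e (q e)))) =
      pd i (MvPowerSeries.monomial (R := R) d (p d)) * (∑ e ∈ s₂, MvPowerSeries.monomial (R := R) e (q e)) +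
        MvPowerSeries.monomial (R := R) d (p d) *
          pd i (∑ e ∈ s₂, MvPowerSeries.monomial (R := R) e (q e)) := by
    intro d _
    rw [Finset.sum_add_distrib, ← Finset.mul_sum, pd_sum, ← Finset.mul_sum]
  rw [Finset.sum_congr rfl h1, Finset.sum_add_distrib, pd_sum i s₁, Finset.sum_mul,
    Finset.sum_mul]

lemma pd_mul [CommRing R] (i : Fin n) (f g : MvPowerSeries (Fin n) R) :
    pd i (f * g) = pd i f * g + f * pd i g := by
  ext m
  set k := dg m + 2 with hk
  set P := truncd k f with hPdef
  set Q := truncd k g with hQdef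
  have hr : ordGE k (f - P) := ordGE_truncd_rem k f
  have hs : ordGE k (g - Q) := ordGE_truncd_rem k g
  have hm1 : dg (m + Finsupp.single i 1) < k := by rw [dg_add, dg_single]; omega
  have hm : dg m < k := by omega
  have coeff_pd_zero : ∀ h : MvPowerSeries (Fin n) R, ordGE k h →
      MvPowerSeries.coeff (R := R) m (pd i h) = 0 := by
    intro h hh
    rw [coeff_pd, ordGE_coeff hh hm1, smul_zero]
  have hL : MvPowerSeries.coeff (R := R) m (pd i (f * g)) =
      MvPowerSeries.coeff (R := R) m (pd i (P * Q)) := by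
    have hfg : f * g = P * Q + ((f - P) * g + P * (g - Q)) := by ring
    have z1 : MvPowerSeries.coeff (R := R) m (pd i ((f - P) * g)) = 0 :=
      coeff_pd_zero ((f - P) * g) (by simpa using ordGE_mul hr (ordGE_zero g))
    have z2 : MvPowerSeries.coeff (R := R) m (pd i (P * (g - Q))) = 0 :=
      coeff_pd_zero (P * (g - Q)) (by simpa using ordGE_mul (ordGE_zero P) hs)
    rw [hfg, pd_add, pd_add, map_add, map_add, z1, z2, add_zero, add_zero]
  have hpd1 : ordGE (dg m + 1) (pd i (f - P)) := ordGE_pd (by rw [hk] at hr; exact hr) i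
  have hpd2 : ordGE (dg m + 1) (pd i (g - Q)) := ordGE_pd (by rw [hk] at hs; exact hs) i
  have hR : MvPowerSeries.coeff (R := R) m (pd i f * g + f * pd i g) =
      MvPowerSeries.coeff (R := R) m (pd i P * Q + P * pd i Q) := by
    have e1 : pd i f * g = pd i P * Q + (pd i (f - P) * g + pd i P * (g - Q)) := by
      have hh : pd i f = pd i P + pd i (f - P) := by
        rw [← pd_add]; congr 1; ring
      rw [hh]; ring
    have e2 : f * pd i g = P * pd i Q + ((f - P) * pd i g + P * pd i (g - Q)) := by
      have hh : pd i g = pd i Q + pd i (g - Q) := by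
        rw [← pd_add]; congr 1; ring
      rw [hh]; ring
    have z1 : MvPowerSeries.coeff (R := R) m (pd i (f - P) * g) = 0 :=
      ordGE_coeff (k := dg m + 1) (by simpa using ordGE_mul hpd1 (ordGE_zero g))
        (Nat.lt_succ_self _)
    have z2 : MvPowerSeries.coeff (R := R) m (pd i P * (g - Q)) = 0 :=
      ordGE_coeff (k := k) (by simpa using ordGE_mul (ordGE_zero (pd i P)) hs) hm
    have z3 : MvPowerSeries.coeff (R := R) m ((f - P) * pd i g) = 0 :=
      ordGE_coeff (k := k) (by simpa using ordGE_mul hr (ordGE_zero (pd i g))) hm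
    have z4 : MvPowerSeries.coeff (R := R) m (P * pd i (g - Q)) = 0 :=
      ordGE_coeff (k := dg m + 1) (by simpa using ordGE_mul (ordGE_zero P) hpd2)
        (Nat.lt_succ_self _)
    rw [e1, e2, map_add, map_add, map_add, map_add, map_add, map_add,
      z1, z2, z3, z4]
    ring
  rw [hL, hR, hPdef, hQdef, truncd_eq_sum, truncd_eq_sum, pd_mul_aux]

end ZZ
set_option maxHeartbeats 1000000
namespace ZZ

open MvPowerSeries

variable {n : ℕ} {R : Type*}

section Der

variable {A : Type*} [CommRing A] (D : A → A)

lemma der_one (hmul : ∀ x y, D (x * y) = D x * y + x * D y) : D 1 = 0 := by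
  have h := hmul 1 1
  rw [one_mul, mul_one, one_mul] at h
  exact (left_eq_add.mp h)

lemma der_pow_succ (hmul : ∀ x y, D (x * y) = D x * y + x * D y) (x : A) :
    ∀ k : ℕ, D (x ^ (k + 1)) = (k + 1) • (x ^ k * D x) := by
  intro k
  induction k with
  | zero => simp
  | succ m ih =>
      rw [pow_succ, hmul, ih, smul_mul_assoc]
      have h1 : x ^ m * D x * x = x ^ (m + 1) * D x := by rw [pow_succ]; ring
      rw [h1]
      conv_rhs => rw [succ_nsmul]

lemma der_prod (hadd : ∀ x y, D (x + y) = D x + D y)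
    (hmul : ∀ x y, D (x * y) = D x * y + x * D y)
    {ι : Type*} [DecidableEq ι] (s : Finset ι) (b : ι → A) :
    D (∏ i ∈ s, b i) = ∑ i ∈ s, (∏ j ∈ s.erase i, b j) * D (b i) := by
  induction s using Finset.induction with
  | empty => simpa using der_one D hmul
  | insert a s hnot ih =>
      rw [Finset.prod_insert hnot, hmul, ih, Finset.mul_sum, Finset.sum_insert hnot,
        Finset.erase_insert hnot]
      congr 1
      · ring
      · apply Finset.sum_congr rfl
        intro i hi
        have hia : i ≠ a := fun h => hnot (h ▸ hi)
        have hset : (insert a s).erase i = insert a (s.erase i) := by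
          ext x
          simp only [Finset.mem_erase, Finset.mem_insert]
          constructor
          · rintro ⟨hx, hx2 | hx2⟩
            · exact Or.inl hx2
            · exact Or.inr ⟨hx, hx2⟩
          · rintro (hx | ⟨hx, hx2⟩)
            · subst hx; exact ⟨hia.symm, Or.inl rfl⟩
            · exact ⟨hx, Or.inr hx2⟩
        rw [hset, Finset.prod_insert (fun h => hnot (Finset.mem_of_mem_erase h))]
        ring

lemma der_prod_pow (hadd : ∀ x y, D (x + y) = D x + D y)
    (hmul : ∀ x y, D (x * y) = D x * y + x * D y)
    (a : Fin n → A) (d : Fin n →₀ ℕ) :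
    D (∏ i, a i ^ d i) = ∑ i, d i •
      ((∏ j ∈ Finset.univ.erase i, a j ^ d j) * (a i ^ (d i - 1) * D (a i))) := by
  rw [der_prod D hadd hmul Finset.univ (fun i => a i ^ d i)]
  apply Finset.sum_congr rfl
  intro i _
  rcases Nat.eq_zero_or_pos (d i) with h | h
  · rw [h, pow_zero, der_one D hmul, mul_zero, zero_smul]
  · obtain ⟨m, hm⟩ := Nat.exists_eq_succ_of_ne_zero (Nat.pos_iff_ne_zero.mp h)
    rw [hm, der_pow_succ D hmul, Nat.succ_sub_one]
    rw [mul_smul_comm]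

end Der

/-- shared algebraic identity for the chain-rule monomial case -/
lemma mono_chain [CommRing R] (a : Fin n → MvPowerSeries (Fin n) R) (d : Fin n →₀ ℕ) (c : R)
    (i : Fin n) (E : MvPowerSeries (Fin n) R) :
    MvPowerSeries.C (σ := Fin n) (R := R) (d i • c) * (∏ l, a l ^ (((d - Finsupp.single i 1) : Fin n →₀ ℕ) l)) * E =
      MvPowerSeries.C (σ := Fin n) (R := R) c *
        (d i • ((∏ j ∈ Finset.univ.erase i, a j ^ d j) * (a i ^ (d i - 1) * E))) := by
  rcases Nat.eq_zero_or_pos (d i) with h | h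
  · rw [h, zero_smul, zero_smul, map_zero, zero_mul, zero_mul, mul_zero]
  · have hprod : (∏ l, a l ^ (((d - Finsupp.single i 1) : Fin n →₀ ℕ) l)) =
        a i ^ (d i - 1) * ∏ j ∈ Finset.univ.erase i, a j ^ d j := by
      rw [← Finset.mul_prod_erase Finset.univ _ (Finset.mem_univ i)]
      congr 1
      · congr 1
        rw [Finsupp.tsub_apply, Finsupp.single_apply, if_pos rfl]
      · apply Finset.prod_congr rfl
        intro l hl
        congr 1
        rw [Finsupp.tsub_apply, Finsupp.single_apply,
          if_neg (fun hh => (Finset.mem_erase.mp hl).1 hh.symm), Nat.sub_zero]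
    rw [hprod, map_nsmul, nsmul_eq_mul, nsmul_eq_mul]
    ring

lemma pd_sub_monomial [CommRing R] (a : Fin n → MvPowerSeries (Fin n) R) (j : Fin n)
    (d : Fin n →₀ ℕ) (c : R) :
    pd j (sub (MvPowerSeries.monomial (R := R) d c) a) =
      ∑ i, sub (pd i (MvPowerSeries.monomial (R := R) d c)) a * pd j (a i) := by
  rw [sub_monomial, pd_mul, pd_C, zero_mul, zero_add,
    der_prod_pow (pd j) (pd_add j) (pd_mul j) a d, Finset.mul_sum]
  apply Finset.sum_congr rfl
  intro i _
  rw [pd_monomial, sub_monomial]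
  exact (mono_chain a d c i (pd j (a i))).symm

lemma pd_sub_chain [CommRing R] {a : Fin n → MvPowerSeries (Fin n) R} (ha : vordGE 1 a)
    (f : MvPowerSeries (Fin n) R) (j : Fin n) :
    pd j (sub f a) = ∑ i, sub (pd i f) a * pd j (a i) := by
  ext m
  set k := dg m + 2 with hk
  set P := truncd k f with hPdef
  have hr : ordGE k (f - P) := ordGE_truncd_rem k f
  have hm : dg m < k := by omega
  have hm1 : dg (m + Finsupp.single j 1) < k := by rw [dg_add, dg_single]; omega
  have hL : MvPowerSeries.coeff (R := R) m (pd j (sub f a)) =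
      MvPowerSeries.coeff (R := R) m (pd j (sub P a)) := by
    have hf : sub f a = sub P a + sub (f - P) a := by
      rw [← sub_add ha]; congr 1; ring
    rw [hf, pd_add, map_add,
      show MvPowerSeries.coeff (R := R) m (pd j (sub (f - P) a)) = 0 by
        rw [coeff_pd, ordGE_coeff (ordGE_sub_of ha hr) hm1, smul_zero],
      add_zero]
  have hR : ∀ i, MvPowerSeries.coeff (R := R) m (sub (pd i f) a * pd j (a i)) =
      MvPowerSeries.coeff (R := R) m (sub (pd i P) a * pd j (a i)) := by
    intro i
    have hf : pd i f = pd i P + pd i (f - P) := by rw [← pd_add]; congr 1; ring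
    have hord : ordGE (dg m + 1) (pd i (f - P)) := ordGE_pd (by rw [hk] at hr; exact hr) i
    have z : MvPowerSeries.coeff (R := R) m (sub (pd i (f - P)) a * pd j (a i)) = 0 :=
      ordGE_coeff (k := dg m + 1)
        (by simpa using ordGE_mul (ordGE_sub_of ha hord) (ordGE_zero (pd j (a i))))
        (Nat.lt_succ_self _)
    rw [hf, sub_add ha, add_mul, map_add, z, add_zero]
  rw [hL, map_sum, Finset.sum_congr rfl (fun i _ => hR i), ← map_sum]
  congr 1
  rw [hPdef, truncd_eq_sum]
  have hswap : ∀ i, sub (pd i (∑ d ∈ (Dk k).filter (fun d => dg d < k),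
      MvPowerSeries.monomial (R := R) d (MvPowerSeries.coeff (R := R) d f))) a * pd j (a i) =
      ∑ d ∈ (Dk k).filter (fun d => dg d < k),
        sub (pd i (MvPowerSeries.monomial (R := R) d (MvPowerSeries.coeff (R := R) d f))) a * pd j (a i) := by
    intro i
    rw [pd_sum, sub_sum ha, Finset.sum_mul]
  rw [sub_sum ha, pd_sum, Finset.sum_congr rfl (fun i _ => hswap i), Finset.sum_comm]
  apply Finset.sum_congr rfl
  intro d _
  exact pd_sub_monomial a j d (MvPowerSeries.coeff (R := R) d f)

end ZZ
set_option maxHeartbeats 1000000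
namespace ZZ

open MvPowerSeries

variable {n : ℕ} {R : Type*} {S : Type*}

lemma derivativeFun_eq (f : PowerSeries ℂ) :
    PowerSeries.derivativeFun f = PowerSeries.derivative ℂ f := rfl

lemma coeff_dt (f : PSZT n) (d : Fin n →₀ ℕ) :
    MvPowerSeries.coeff (R := (PowerSeries ℂ)) d (dt f) =
      PowerSeries.derivativeFun (MvPowerSeries.coeff (R := (PowerSeries ℂ)) d f) := by
  apply PowerSeries.ext
  intro k
  rw [dt, coeff_PSmk, PowerSeries.coeff_mk, derivativeFun_eq, PowerSeries.coeff_derivativeFun]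
  push_cast
  ring

lemma derFun_zero : PowerSeries.derivativeFun (0 : PowerSeries ℂ) = 0 := by
  apply PowerSeries.ext
  intro k
  rw [derivativeFun_eq, PowerSeries.coeff_derivativeFun]
  simp

lemma derFun_one : PowerSeries.derivativeFun (1 : PowerSeries ℂ) = 0 := by
  have : (1 : PowerSeries ℂ) = PowerSeries.C (R := ℂ) 1 := (map_one _).symm
  rw [this, derivativeFun_eq, PowerSeries.derivativeFun_C]

lemma derFun_mul' (f g : PowerSeries ℂ) :
    PowerSeries.derivativeFun (f * g) =
      PowerSeries.derivativeFun f * g + f * PowerSeries.derivativeFun g := by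
  rw [PowerSeries.derivativeFun_mul, smul_eq_mul, smul_eq_mul]
  ring

lemma derFun_sum {ι : Type*} (s : Finset ι) (F : ι → PowerSeries ℂ) :
    PowerSeries.derivativeFun (∑ i ∈ s, F i) = ∑ i ∈ s, PowerSeries.derivativeFun (F i) := by
  classical
  induction s using Finset.induction with
  | empty => simpa using derFun_zero
  | insert _ _ hnot ih =>
      rw [Finset.sum_insert hnot, Finset.sum_insert hnot, PowerSeries.derivativeFun_add, ih]

lemma dt_add (f g : PSZT n) : dt (f + g) = dt f + dt g := by
  apply MvPowerSeries.ext
  intro d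
  rw [map_add, coeff_dt, coeff_dt, coeff_dt, map_add, PowerSeries.derivativeFun_add]

lemma dt_mul (f g : PSZT n) : dt (f * g) = dt f * g + f * dt g := by
  classical
  apply MvPowerSeries.ext
  intro d
  rw [coeff_dt, MvPowerSeries.coeff_mul, derFun_sum, map_add,
    MvPowerSeries.coeff_mul, MvPowerSeries.coeff_mul, ← Finset.sum_add_distrib]
  apply Finset.sum_congr rfl
  intro p _
  rw [derFun_mul', coeff_dt, coeff_dt]

lemma dt_monomial (d : Fin n →₀ ℕ) (c : PowerSeries ℂ) :
    dt (MvPowerSeries.monomial (R := (PowerSeries ℂ)) d c) =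
      MvPowerSeries.monomial (R := (PowerSeries ℂ)) d (PowerSeries.derivativeFun c) := by
  classical
  apply MvPowerSeries.ext
  intro e
  rw [coeff_dt, MvPowerSeries.coeff_monomial, MvPowerSeries.coeff_monomial]
  by_cases h : e = d
  · rw [if_pos h, if_pos h]
  · rw [if_neg h, if_neg h, derFun_zero]

lemma dt_C (c : PowerSeries ℂ) :
    dt (MvPowerSeries.C (σ := Fin n) (R := (PowerSeries ℂ)) c) =
      MvPowerSeries.C (σ := Fin n) (R := (PowerSeries ℂ)) (PowerSeries.derivativeFun c) := by
  rw [← MvPowerSeries.monomial_zero_eq_C]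
  exact dt_monomial 0 c

lemma dt_inclZ (U : MvPowerSeries (Fin n) ℂ) : dt (inclZ U) = 0 := by
  apply MvPowerSeries.ext
  intro d
  rw [coeff_dt]
  have : MvPowerSeries.coeff (R := (PowerSeries ℂ)) d (inclZ U) =
      PowerSeries.C (R := ℂ) (MvPowerSeries.coeff (R := ℂ) d U) := by
    rw [inclZ, MvPowerSeries.coeff_map]
  rw [this, derivativeFun_eq, PowerSeries.derivativeFun_C, map_zero]

lemma derFun_X : PowerSeries.derivativeFun (PowerSeries.X : PowerSeries ℂ) = 1 := by
  apply PowerSeries.ext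
  intro k
  rw [derivativeFun_eq, PowerSeries.coeff_derivativeFun, PowerSeries.coeff_X, PowerSeries.coeff_one]
  by_cases h : k = 0
  · subst h; norm_num
  · rw [if_neg (by omega : ¬(k + 1 = 1)), if_neg h, zero_mul]

lemma dt_tT : dt (tT : PSZT n) = 1 := by
  rw [tT, dt_C, derFun_X, map_one]

lemma dt_X (i : Fin n) : dt (MvPowerSeries.X i : PSZT n) = 0 := by
  rw [MvPowerSeries.X_def, dt_monomial, derFun_one, map_zero]

lemma dt_zero : dt (0 : PSZT n) = 0 := by
  apply MvPowerSeries.ext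
  intro d
  rw [coeff_dt, map_zero, derFun_zero]

lemma dt_sum {ι : Type*} (s : Finset ι) (F : ι → PSZT n) :
    dt (∑ i ∈ s, F i) = ∑ i ∈ s, dt (F i) := by
  classical
  induction s using Finset.induction with
  | empty => simpa using dt_zero
  | insert _ _ hnot ih => rw [Finset.sum_insert hnot, Finset.sum_insert hnot, dt_add, ih]

lemma dt_sub_diff (f g : PSZT n) : dt (f - g) = dt f - dt g := by
  have h := dt_add (f - g) g
  rw [sub_add_cancel] at h
  rw [h]; ring

lemma ordGE_dt {k : ℕ} {f : PSZT n} (hf : ordGE k f) : ordGE k (dt f) := by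
  intro d hd
  rw [coeff_dt, ordGE_coeff hf hd, derFun_zero]

lemma dt_sub_monomial (a : Fin n → PSZT n) (d : Fin n →₀ ℕ) (c : PowerSeries ℂ) :
    dt (sub (MvPowerSeries.monomial (R := (PowerSeries ℂ)) d c) a) =
      sub (dt (MvPowerSeries.monomial (R := (PowerSeries ℂ)) d c)) a +
        ∑ i, sub (pd i (MvPowerSeries.monomial (R := (PowerSeries ℂ)) d c)) a * dt (a i) := by
  rw [sub_monomial, dt_mul, dt_C, der_prod_pow dt dt_add dt_mul a d, Finset.mul_sum,
    dt_monomial, sub_monomial]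
  congr 1
  apply Finset.sum_congr rfl
  intro i _
  rw [pd_monomial, sub_monomial]
  exact (mono_chain a d c i (dt (a i))).symm

lemma dt_sub_chain {a : Fin n → PSZT n} (ha : vordGE 1 a) (f : PSZT n) :
    dt (sub f a) = sub (dt f) a + ∑ i, sub (pd i f) a * dt (a i) := by
  apply MvPowerSeries.ext
  intro m
  set k := dg m + 2 with hk
  set P := truncd k f with hPdef
  have hr : ordGE k (f - P) := ordGE_truncd_rem k f
  have hm : dg m < k := by omega
  have hL : MvPowerSeries.coeff (R := (PowerSeries ℂ)) m (dt (sub f a)) =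
      MvPowerSeries.coeff (R := (PowerSeries ℂ)) m (dt (sub P a)) := by
    have hf : sub f a = sub P a + sub (f - P) a := by
      rw [← sub_add ha]; congr 1; ring
    rw [hf, dt_add, map_add,
      ordGE_coeff (ordGE_dt (ordGE_sub_of ha hr)) hm, add_zero]
  have hR1 : MvPowerSeries.coeff (R := (PowerSeries ℂ)) m (sub (dt f) a) =
      MvPowerSeries.coeff (R := (PowerSeries ℂ)) m (sub (dt P) a) := by
    have hf : dt f = dt P + dt (f - P) := by rw [← dt_add]; congr 1; ring
    rw [hf, sub_add ha, map_add, ordGE_coeff (ordGE_sub_of ha (ordGE_dt hr)) hm, add_zero]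
  have hR2 : ∀ i, MvPowerSeries.coeff (R := (PowerSeries ℂ)) m (sub (pd i f) a * dt (a i)) =
      MvPowerSeries.coeff (R := (PowerSeries ℂ)) m (sub (pd i P) a * dt (a i)) := by
    intro i
    have hf : pd i f = pd i P + pd i (f - P) := by rw [← pd_add]; congr 1; ring
    have hord : ordGE (dg m + 1) (pd i (f - P)) := ordGE_pd (by rw [hk] at hr; exact hr) i
    have z : MvPowerSeries.coeff (R := (PowerSeries ℂ)) m (sub (pd i (f - P)) a * dt (a i)) = 0 :=
      ordGE_coeff (k := dg m + 1)
        (by simpa using ordGE_mul (ordGE_sub_of ha hord) (ordGE_zero (dt (a i))))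
        (Nat.lt_succ_self _)
    rw [hf, sub_add ha, add_mul, map_add, z, add_zero]
  rw [hL, map_add, map_sum, hR1, Finset.sum_congr rfl (fun i _ => hR2 i)]
  have goal2 : dt (sub P a) = sub (dt P) a + ∑ i, sub (pd i P) a * dt (a i) := by
    rw [hPdef, truncd_eq_sum]
    have hswap : ∀ i, sub (pd i (∑ d ∈ (Dk k).filter (fun d => dg d < k),
        MvPowerSeries.monomial (R := (PowerSeries ℂ)) d (MvPowerSeries.coeff (R := (PowerSeries ℂ)) d f))) a
          * dt (a i) =
        ∑ d ∈ (Dk k).filter (fun d => dg d < k),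
          sub (pd i (MvPowerSeries.monomial (R := (PowerSeries ℂ)) d
            (MvPowerSeries.coeff (R := (PowerSeries ℂ)) d f))) a * dt (a i) := by
      intro i
      rw [pd_sum, sub_sum ha, Finset.sum_mul]
    rw [sub_sum ha, dt_sum, dt_sum, sub_sum ha,
      Finset.sum_congr rfl (fun i _ => hswap i), Finset.sum_comm, ← Finset.sum_add_distrib]
    apply Finset.sum_congr rfl
    intro d _
    exact dt_sub_monomial a d (MvPowerSeries.coeff (R := (PowerSeries ℂ)) d f)
  rw [goal2, map_add, map_sum]

lemma vordGE_map [CommRing R] [CommRing S] (φ : R →+* S) {a : Fin n → MvPowerSeries (Fin n) R}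
    (ha : vordGE 1 a) : vordGE 1 (fun i => MvPowerSeries.map (σ := Fin n) φ (a i)) := by
  intro i d hd
  rw [MvPowerSeries.coeff_map, ha i d hd, map_zero]

lemma map_sub_comm [CommRing R] [CommRing S] (φ : R →+* S)
    {a : Fin n → MvPowerSeries (Fin n) R} (ha : vordGE 1 a) (f : MvPowerSeries (Fin n) R) :
    MvPowerSeries.map (σ := Fin n) φ (sub f a) =
      sub (MvPowerSeries.map (σ := Fin n) φ f) (fun i => MvPowerSeries.map (σ := Fin n) φ (a i)) := by
  apply MvPowerSeries.ext
  intro m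
  rw [MvPowerSeries.coeff_map, coeff_sub ha, coeff_sub (vordGE_map φ ha), map_sum]
  apply Finset.sum_congr rfl
  intro d _
  rw [map_mul]
  congr 1
  rw [← MvPowerSeries.coeff_map]
  congr 1
  rw [map_prod]
  apply Finset.prod_congr rfl
  intro i _
  rw [map_pow]

end ZZ
set_option maxHeartbeats 1000000
namespace ZZ

open MvPowerSeries

variable {n : ℕ} {R : Type*}

lemma pd_sub_diff [CommRing R] (i : Fin n) (f g : MvPowerSeries (Fin n) R) :
    pd i (f - g) = pd i f - pd i g := by
  have h := pd_add i (f - g) g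
  rw [sub_add_cancel] at h
  rw [h]; ring

lemma map_monomial' [CommRing R] {S : Type*} [CommRing S] (φ : R →+* S) (d : Fin n →₀ ℕ)
    (c : R) : MvPowerSeries.map (σ := Fin n) φ (MvPowerSeries.monomial (R := R) d c) =
      MvPowerSeries.monomial (R := S) d (φ c) := by
  classical
  apply MvPowerSeries.ext
  intro e
  rw [MvPowerSeries.coeff_map, MvPowerSeries.coeff_monomial, MvPowerSeries.coeff_monomial]
  by_cases h : e = d
  · rw [if_pos h, if_pos h]
  · rw [if_neg h, if_neg h, map_zero]

lemma map_X' [CommRing R] {S : Type*} [CommRing S] (φ : R →+* S) (i : Fin n) :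
    MvPowerSeries.map (σ := Fin n) φ (MvPowerSeries.X i) = MvPowerSeries.X i := by
  rw [MvPowerSeries.X_def, map_monomial', map_one, MvPowerSeries.X_def]

lemma inclZ_X (i : Fin n) : (inclZ (MvPowerSeries.X i) : PSZT n) = MvPowerSeries.X i :=
  map_X' _ i

lemma evalT0_X (i : Fin n) : evalT0 (MvPowerSeries.X i : PSZT n) = MvPowerSeries.X i :=
  map_X' _ i

lemma evalT0_inclZ (U : MvPowerSeries (Fin n) ℂ) : evalT0 (inclZ U) = U := by
  apply MvPowerSeries.ext
  intro m
  rw [evalT0, MvPowerSeries.coeff_map, inclZ, MvPowerSeries.coeff_map,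
    PowerSeries.constantCoeff_C]

lemma evalT0_tT : evalT0 (tT : PSZT n) = 0 := by
  apply MvPowerSeries.ext
  intro m
  rw [tT, evalT0, MvPowerSeries.coeff_map, map_zero]
  classical
  rw [MvPowerSeries.coeff_C]
  by_cases h : m = 0
  · rw [if_pos h]; simp
  · rw [if_neg h]; simp

lemma tT_ne_zero : (tT : PSZT n) ≠ 0 := by
  intro h
  have h2 := congrArg (MvPowerSeries.coeff (R := (PowerSeries ℂ)) 0) h
  classical
  rw [tT, MvPowerSeries.coeff_C, if_pos rfl, map_zero] at h2
  exact PowerSeries.X_ne_zero h2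

lemma constantCoeff_sub [CommRing R] {a : Fin n → MvPowerSeries (Fin n) R} (ha : vordGE 1 a)
    (f : MvPowerSeries (Fin n) R) :
    MvPowerSeries.coeff (R := R) 0 (sub f a) = MvPowerSeries.coeff (R := R) 0 f := by
  classical
  rw [coeff_sub ha]
  rw [Finset.sum_eq_single 0]
  · have : (∏ i, a i ^ ((0 : Fin n →₀ ℕ) i)) = 1 := by
      apply Finset.prod_eq_one
      intro i _
      rw [Finsupp.coe_zero, Pi.zero_apply, pow_zero]
    rw [this]
    classical
    rw [MvPowerSeries.coeff_one, if_pos rfl, mul_one]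
  · intro d _ hd
    have hgt : dg (0 : Fin n →₀ ℕ) < dg d := by
      have h0 : dg (0 : Fin n →₀ ℕ) = 0 := by simp [dg]
      rw [h0]
      by_contra hle
      exact hd (dg_eq_zero (by omega))
    rw [coeff_prod_eq_zero ha hgt, mul_zero]
  · intro h0
    exact absurd (mem_Dk (by simp [dg])) h0

lemma ode_zero {M : Fin n → PSZT n} {D : PSZT n}
    (hD : dt D = ∑ i, pd i D * M i) (h0 : evalT0 D = 0) : D = 0 := by
  classical
  have key : ∀ k : ℕ, ∀ m : Fin n →₀ ℕ,
      PowerSeries.coeff (R := ℂ) k (MvPowerSeries.coeff (R := (PowerSeries ℂ)) m D) = 0 := by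
    intro k
    induction k using Nat.strong_induction_on with
    | _ k ih =>
      intro m
      match k with
      | 0 =>
        have h := congrArg (MvPowerSeries.coeff (R := ℂ) m) h0
        rw [map_zero, evalT0, MvPowerSeries.coeff_map] at h
        rw [PowerSeries.coeff_zero_eq_constantCoeff]
        exact h
      | (k' + 1) =>
        have h := congrArg
          (fun W => PowerSeries.coeff (R := ℂ) k' (MvPowerSeries.coeff (R := (PowerSeries ℂ)) m W)) hD
        have hL : PowerSeries.coeff (R := ℂ) k' (MvPowerSeries.coeff (R := (PowerSeries ℂ)) m (dt D)) =
            ((k' + 1 : ℕ) : ℂ) *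
              PowerSeries.coeff (R := ℂ) (k' + 1) (MvPowerSeries.coeff (R := (PowerSeries ℂ)) m D) := by
          rw [dt, coeff_PSmk, PowerSeries.coeff_mk]
        have hR : PowerSeries.coeff (R := ℂ) k'
            (MvPowerSeries.coeff (R := (PowerSeries ℂ)) m (∑ i, pd i D * M i)) = 0 := by
          rw [map_sum, map_sum]
          apply Finset.sum_eq_zero
          intro i _
          rw [MvPowerSeries.coeff_mul, map_sum]
          apply Finset.sum_eq_zero
          intro p _
          rw [PowerSeries.coeff_mul]
          apply Finset.sum_eq_zero
          intro q hq
          have hq1 : q.1 ≤ k' := by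
            have := Finset.HasAntidiagonal.mem_antidiagonal.mp hq; omega
          have hz : PowerSeries.coeff (R := ℂ) q.1
              (MvPowerSeries.coeff (R := (PowerSeries ℂ)) p.1 (pd i D)) = 0 := by
            rw [coeff_pd, map_nsmul, ih q.1 (by omega) _, smul_zero]
          rw [hz, zero_mul]
        rw [hL, hR] at h
        rcases mul_eq_zero.mp h with h' | h'
        · exact absurd h' (Nat.cast_ne_zero.mpr (Nat.succ_ne_zero k'))
        · exact h'
  apply MvPowerSeries.ext
  intro m
  apply PowerSeries.ext
  intro k
  rw [map_zero, map_zero]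
  exact key k m

lemma lin_ode_zero {C : Fin n → Fin n → PSZT n} {φ : Fin n → PSZT n}
    (hD : ∀ i, dt (φ i) = ∑ j, C i j * φ j) (h0 : ∀ i, evalT0 (φ i) = 0) :
    ∀ i, φ i = 0 := by
  classical
  have key : ∀ k : ℕ, ∀ i : Fin n, ∀ m : Fin n →₀ ℕ,
      PowerSeries.coeff (R := ℂ) k (MvPowerSeries.coeff (R := (PowerSeries ℂ)) m (φ i)) = 0 := by
    intro k
    induction k using Nat.strong_induction_on with
    | _ k ih =>
      intro i m
      match k with
      | 0 =>
        have h := congrArg (MvPowerSeries.coeff (R := ℂ) m) (h0 i)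
        rw [map_zero, evalT0, MvPowerSeries.coeff_map] at h
        rw [PowerSeries.coeff_zero_eq_constantCoeff]
        exact h
      | (k' + 1) =>
        have h := congrArg
          (fun W => PowerSeries.coeff (R := ℂ) k' (MvPowerSeries.coeff (R := (PowerSeries ℂ)) m W)) (hD i)
        have hL : PowerSeries.coeff (R := ℂ) k' (MvPowerSeries.coeff (R := (PowerSeries ℂ)) m (dt (φ i))) =
            ((k' + 1 : ℕ) : ℂ) *
              PowerSeries.coeff (R := ℂ) (k' + 1) (MvPowerSeries.coeff (R := (PowerSeries ℂ)) m (φ i)) := by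
          rw [dt, coeff_PSmk, PowerSeries.coeff_mk]
        have hR : PowerSeries.coeff (R := ℂ) k'
            (MvPowerSeries.coeff (R := (PowerSeries ℂ)) m (∑ j, C i j * φ j)) = 0 := by
          rw [map_sum, map_sum]
          apply Finset.sum_eq_zero
          intro j _
          rw [MvPowerSeries.coeff_mul, map_sum]
          apply Finset.sum_eq_zero
          intro p _
          rw [PowerSeries.coeff_mul]
          apply Finset.sum_eq_zero
          intro q hq
          have hq2 : q.2 ≤ k' := by
            have := Finset.HasAntidiagonal.mem_antidiagonal.mp hq; omega
          rw [ih q.2 (by omega) j p.2, mul_zero]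
        rw [hL, hR] at h
        rcases mul_eq_zero.mp h with h' | h'
        · exact absurd h' (Nat.cast_ne_zero.mpr (Nat.succ_ne_zero k'))
        · exact h'
  intro i
  apply MvPowerSeries.ext
  intro m
  apply PowerSeries.ext
  intro k
  rw [map_zero, map_zero]
  exact key k i m

end ZZ
set_option maxHeartbeats 1600000
namespace ZZ

variable {n : ℕ}

lemma sub_tT (a : Fin n → PSZT n) : sub tT a = tT := sub_C a PowerSeries.X

end ZZ

theorem stmt12' {n : ℕ} (Nt : Fin n → PSZP n) (hNt : vordGE 1 Nt) :
    (∃ H : Fin n → MvPowerSeries (Fin n) ℂ,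
        IsInv (fun i => MvPowerSeries.X i - tT * inclZ (H i))
          (fun i => MvPowerSeries.X i + tT * polyToSer (Nt i))) ↔
      ∀ U : MvPowerSeries (Fin n) ℂ,
        (dt (sub (inclZ U) fun j => MvPowerSeries.X j + tT * polyToSer (Nt j)) =
            ∑ i, pd i (sub (inclZ U) fun j => MvPowerSeries.X j + tT * polyToSer (Nt j)) *
              polyToSer (Nt i) ∧
          evalT0 (sub (inclZ U) fun j => MvPowerSeries.X j + tT * polyToSer (Nt j)) = U) ∧
        ∀ W : PSZT n,
          (dt W = ∑ i, pd i W * polyToSer (Nt i) ∧ evalT0 W = U) →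
            W = sub (inclZ U) fun j => MvPowerSeries.X j + tT * polyToSer (Nt j) := by
  classical
  set F : Fin n → PSZT n := fun j => MvPowerSeries.X j + tT * polyToSer (Nt j) with hFdef
  have hN1 : ∀ i, ordGE 1 (polyToSer (Nt i) : PSZT n) := by
    intro i d hd
    rw [polyToSer, MvPowerSeries.coeff_map, hNt i d hd, map_zero]
  have hvF : vordGE 1 F := by
    intro j d hd
    have h1 : MvPowerSeries.coeff (R := (PowerSeries ℂ)) d (MvPowerSeries.X j : PSZT n) = 0 :=
      ZZ.vordGE_X j d hd
    have h2 : MvPowerSeries.coeff (R := (PowerSeries ℂ)) d (tT * polyToSer (Nt j)) = 0 :=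
      (by simpa using ZZ.ordGE_mul (ZZ.ordGE_zero (tT : PSZT n)) (hN1 j) : ordGE 1 _) d hd
    show MvPowerSeries.coeff d (MvPowerSeries.X j + tT * polyToSer (Nt j)) = 0
    rw [map_add, h1, h2, add_zero]
  have hdtF : ∀ i, dt (F i) = polyToSer (Nt i) + tT * dt (polyToSer (Nt i)) := by
    intro i
    show dt (MvPowerSeries.X i + tT * polyToSer (Nt i)) = _
    rw [ZZ.dt_add, ZZ.dt_X, ZZ.dt_mul, ZZ.dt_tT, one_mul, zero_add]
  have hpdF : ∀ j i, pd j (F i) =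
      (if j = i then 1 else 0) + tT * pd j (polyToSer (Nt i)) := by
    intro j i
    show pd j (MvPowerSeries.X i + tT * polyToSer (Nt i)) = _
    rw [ZZ.pd_add, ZZ.pd_X, ZZ.pd_mul, tT, ZZ.pd_C, zero_mul, zero_add]
  have hT0F : ∀ i, evalT0 (F i) = MvPowerSeries.X i := by
    intro i
    show evalT0 (MvPowerSeries.X i + tT * polyToSer (Nt i)) = _
    rw [map_add, map_mul, ZZ.evalT0_tT, zero_mul, add_zero, ZZ.evalT0_X]
  constructor
  · -- forward direction
    rintro ⟨H, hGF, hFG⟩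
    set G : Fin n → PSZT n := fun i => MvPowerSeries.X i - tT * inclZ (H i) with hGdef
    -- hGF : ∀ i, sub (G i) F = X i ; hFG : ∀ i, sub (F i) G = X i
    have hHF : ∀ i, sub (inclZ (H i)) F = polyToSer (Nt i) := by
      intro i
      have h := hGF i
      have hGi : G i = MvPowerSeries.X i - tT * inclZ (H i) := rfl
      rw [hGi, ZZ.sub_sub_eq hvF, ZZ.sub_X, ZZ.sub_mul hvF, ZZ.sub_tT] at h
      have hFi : F i = MvPowerSeries.X i + tT * polyToSer (Nt i) := rfl
      have h2 : tT * sub (inclZ (H i)) F = tT * polyToSer (Nt i) := by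
        linear_combination hFi - h
      exact mul_left_cancel₀ ZZ.tT_ne_zero h2
    have hH0 : ∀ i, MvPowerSeries.coeff (R := ℂ) 0 (H i) = 0 := by
      intro i
      have h := congrArg (MvPowerSeries.coeff (R := (PowerSeries ℂ)) 0) (hHF i)
      rw [ZZ.constantCoeff_sub hvF, inclZ, MvPowerSeries.coeff_map,
        hN1 i 0 (by simp [ZZ.dg])] at h
      have h2 := congrArg (PowerSeries.constantCoeff (R := ℂ)) h
      rw [PowerSeries.constantCoeff_C, map_zero] at h2
      exact h2
    have hvG : vordGE 1 G := by
      intro j d hd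
      have hd0 : d = 0 := ZZ.dg_eq_zero (Nat.lt_one_iff.mp hd)
      subst hd0
      show MvPowerSeries.coeff 0 (MvPowerSeries.X j - tT * inclZ (H j)) = 0
      rw [map_sub, (ZZ.vordGE_X j 0 (by simp [ZZ.dg]) :
        MvPowerSeries.coeff (R := (PowerSeries ℂ)) 0 (MvPowerSeries.X j) = 0)]
      rw [tT, ← MvPowerSeries.smul_eq_C_mul, MvPowerSeries.coeff_smul, inclZ,
        MvPowerSeries.coeff_map, hH0 j, map_zero]
      ring
    have hdtG : ∀ j, dt (G j) = -inclZ (H j) := by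
      intro j
      show dt (MvPowerSeries.X j - tT * inclZ (H j)) = _
      rw [ZZ.dt_sub_diff, ZZ.dt_X, ZZ.dt_mul, ZZ.dt_tT, ZZ.dt_inclZ, one_mul, mul_zero,
        add_zero, zero_sub]
    have hstar : ∀ i, dt (F i) = ∑ j, pd j (F i) * polyToSer (Nt j) := by
      intro i
      have hdtc := congrArg dt (hFG i)
      rw [ZZ.dt_X, ZZ.dt_sub_chain hvG (F i)] at hdtc
      rw [Finset.sum_congr rfl (fun j (_ : j ∈ Finset.univ) => by rw [hdtG j, mul_neg])]
        at hdtc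
      rw [Finset.sum_neg_distrib] at hdtc
      have eqA : sub (dt (F i)) G = ∑ j, sub (pd j (F i)) G * inclZ (H j) := by
        linear_combination hdtc
      have eqB := congrArg (fun W => sub W F) eqA
      have hcomp : (fun j => sub (G j) F) = (fun j => (MvPowerSeries.X j : PSZT n)) :=
        funext hGF
      rw [ZZ.sub_assoc hvG hvF, hcomp, ZZ.sub_X_family, ZZ.sub_sum hvF] at eqB
      rw [Finset.sum_congr rfl (fun j (_ : j ∈ Finset.univ) => by
        rw [ZZ.sub_mul hvF, ZZ.sub_assoc hvG hvF, hcomp, ZZ.sub_X_family, hHF j])] at eqB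
      exact eqB
    intro U
    have hPDE : dt (sub (inclZ U) F) = ∑ i, pd i (sub (inclZ U) F) * polyToSer (Nt i) := by
      rw [ZZ.dt_sub_chain hvF (inclZ U), ZZ.dt_inclZ, ZZ.sub_zero', zero_add]
      rw [Finset.sum_congr rfl (fun i (_ : i ∈ Finset.univ) => by
        rw [hstar i, Finset.mul_sum])]
      rw [Finset.sum_comm]
      apply Finset.sum_congr rfl
      intro j _
      rw [ZZ.pd_sub_chain hvF (inclZ U) j, Finset.sum_mul]
      apply Finset.sum_congr rfl
      intro i _
      ring
    have hInit : evalT0 (sub (inclZ U) F) = U := by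
      show MvPowerSeries.map (σ := Fin n) (PowerSeries.constantCoeff (R := ℂ)) (sub (inclZ U) F) = U
      rw [ZZ.map_sub_comm _ hvF]
      have h2 : (fun i => MvPowerSeries.map (σ := Fin n) (PowerSeries.constantCoeff (R := ℂ)) (F i)) =
          (fun i => (MvPowerSeries.X i : MvPowerSeries (Fin n) ℂ)) := funext hT0F
      rw [h2]
      have h1 : MvPowerSeries.map (σ := Fin n) (PowerSeries.constantCoeff (R := ℂ)) (inclZ U) = U :=
        ZZ.evalT0_inclZ U
      rw [h1, ZZ.sub_X_family]
    refine ⟨⟨hPDE, hInit⟩, ?_⟩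
    rintro W ⟨hW1, hW2⟩
    have hD : dt (W - sub (inclZ U) F) =
        ∑ i, pd i (W - sub (inclZ U) F) * polyToSer (Nt i) := by
      rw [ZZ.dt_sub_diff, hW1, hPDE, ← Finset.sum_sub_distrib]
      apply Finset.sum_congr rfl
      intro i _
      rw [ZZ.pd_sub_diff, sub_mul]
    have hz : evalT0 (W - sub (inclZ U) F) = 0 := by
      rw [map_sub, hW2, hInit, sub_self]
    exact sub_eq_zero.mp (ZZ.ode_zero hD hz)
  · -- backward direction
    intro hR
    set H : Fin n → MvPowerSeries (Fin n) ℂ := fun i => evalT0 (polyToSer (Nt i)) with hHdef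
    set G : Fin n → PSZT n := fun i => MvPowerSeries.X i - tT * inclZ (H i) with hGdef
    have hSX : ∀ i, sub (inclZ (MvPowerSeries.X i)) F = F i := by
      intro i
      rw [ZZ.inclZ_X, ZZ.sub_X]
    have hstar : ∀ i, dt (F i) = ∑ j, pd j (F i) * polyToSer (Nt j) := by
      intro i
      have h := (hR (MvPowerSeries.X i)).1.1
      rw [hSX i] at h
      exact h
    have hQ : ∀ i, dt (polyToSer (Nt i) : PSZT n) =
        ∑ j, pd j (polyToSer (Nt i) : PSZT n) * polyToSer (Nt j) := by
      intro i
      have h := hstar i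
      rw [hdtF i] at h
      rw [Finset.sum_congr rfl (fun j (_ : j ∈ Finset.univ) => by
        rw [hpdF j i, add_mul])] at h
      rw [Finset.sum_add_distrib] at h
      have hfirst : (∑ j, (if j = i then (1 : PSZT n) else 0) * polyToSer (Nt j)) =
          polyToSer (Nt i) := by
        rw [Finset.sum_congr rfl (fun j (_ : j ∈ Finset.univ) => by
          rw [ite_mul, one_mul, zero_mul])]
        rw [Finset.sum_ite_eq' Finset.univ i, if_pos (Finset.mem_univ i)]
      have hsecond : (∑ j, tT * pd j (polyToSer (Nt i) : PSZT n) * polyToSer (Nt j)) =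
          tT * ∑ j, pd j (polyToSer (Nt i) : PSZT n) * polyToSer (Nt j) := by
        rw [Finset.mul_sum]
        apply Finset.sum_congr rfl
        intro j _
        rw [mul_assoc]
      rw [hfirst, hsecond] at h
      have h2 : tT * dt (polyToSer (Nt i) : PSZT n) =
          tT * ∑ j, pd j (polyToSer (Nt i) : PSZT n) * polyToSer (Nt j) := by
        linear_combination h
      exact mul_left_cancel₀ ZZ.tT_ne_zero h2
    have hNF : ∀ i, (polyToSer (Nt i) : PSZT n) = sub (inclZ (H i)) F := by
      intro i
      exact (hR (H i)).2 (polyToSer (Nt i)) ⟨hQ i, rfl⟩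
    have hH0 : ∀ i, MvPowerSeries.coeff (R := ℂ) 0 (H i) = 0 := by
      intro i
      show MvPowerSeries.coeff (R := ℂ) 0 (evalT0 (polyToSer (Nt i))) = 0
      rw [evalT0, MvPowerSeries.coeff_map, hN1 i 0 (by simp [ZZ.dg]), map_zero]
    have hvG : vordGE 1 G := by
      intro j d hd
      have hd0 : d = 0 := ZZ.dg_eq_zero (Nat.lt_one_iff.mp hd)
      subst hd0
      show MvPowerSeries.coeff 0 (MvPowerSeries.X j - tT * inclZ (H j)) = 0
      rw [map_sub, (ZZ.vordGE_X j 0 (by simp [ZZ.dg]) :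
        MvPowerSeries.coeff (R := (PowerSeries ℂ)) 0 (MvPowerSeries.X j) = 0)]
      rw [tT, ← MvPowerSeries.smul_eq_C_mul, MvPowerSeries.coeff_smul, inclZ,
        MvPowerSeries.coeff_map, hH0 j, map_zero]
      ring
    have hdtG : ∀ j, dt (G j) = -inclZ (H j) := by
      intro j
      show dt (MvPowerSeries.X j - tT * inclZ (H j)) = _
      rw [ZZ.dt_sub_diff, ZZ.dt_X, ZZ.dt_mul, ZZ.dt_tT, ZZ.dt_inclZ, one_mul, mul_zero,
        add_zero, zero_sub]
    have hT0G : ∀ j, evalT0 (G j) = MvPowerSeries.X j := by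
      intro j
      show evalT0 (MvPowerSeries.X j - tT * inclZ (H j)) = _
      rw [map_sub, map_mul, ZZ.evalT0_tT, zero_mul, sub_zero, ZZ.evalT0_X]
    have hODE : ∀ i, dt (sub (polyToSer (Nt i)) G - inclZ (H i)) =
        ∑ j, sub (pd j (polyToSer (Nt i) : PSZT n)) G *
          (sub (polyToSer (Nt j)) G - inclZ (H j)) := by
      intro i
      rw [ZZ.dt_sub_diff, ZZ.dt_inclZ, sub_zero, ZZ.dt_sub_chain hvG (polyToSer (Nt i)),
        hQ i, ZZ.sub_sum hvG]
      have e1 : (∑ j, sub (pd j (polyToSer (Nt i) : PSZT n) * polyToSer (Nt j)) G) =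
          ∑ j, sub (pd j (polyToSer (Nt i) : PSZT n)) G * sub (polyToSer (Nt j)) G :=
        Finset.sum_congr rfl (fun j _ => ZZ.sub_mul hvG _ _)
      have e2 : (∑ j, sub (pd j (polyToSer (Nt i) : PSZT n)) G * dt (G j)) =
          ∑ j, sub (pd j (polyToSer (Nt i) : PSZT n)) G * (-inclZ (H j)) :=
        Finset.sum_congr rfl (fun j _ => by rw [hdtG j])
      rw [e1, e2, ← Finset.sum_add_distrib]
      apply Finset.sum_congr rfl
      intro j _
      ring
    have hphi0 : ∀ i, evalT0 (sub (polyToSer (Nt i)) G - inclZ (H i)) = 0 := by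
      intro i
      rw [map_sub, ZZ.evalT0_inclZ]
      have h1 : evalT0 (sub (polyToSer (Nt i)) G) = H i := by
        show MvPowerSeries.map (σ := Fin n) (PowerSeries.constantCoeff (R := ℂ))
          (sub (polyToSer (Nt i)) G) = H i
        rw [ZZ.map_sub_comm _ hvG]
        have h2 : (fun j => MvPowerSeries.map (σ := Fin n) (PowerSeries.constantCoeff (R := ℂ)) (G j)) =
            (fun j => (MvPowerSeries.X j : MvPowerSeries (Fin n) ℂ)) := funext hT0G
        rw [h2, ZZ.sub_X_family]
        rfl
      rw [h1, sub_self]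
    have hphiz := ZZ.lin_ode_zero
      (C := fun i j => sub (pd j (polyToSer (Nt i) : PSZT n)) G)
      (φ := fun i => sub (polyToSer (Nt i)) G - inclZ (H i)) hODE hphi0
    have hNG : ∀ i, sub (polyToSer (Nt i)) G = inclZ (H i) :=
      fun i => sub_eq_zero.mp (hphiz i)
    refine ⟨H, ?_, ?_⟩
    · intro i
      show sub (MvPowerSeries.X i - tT * inclZ (H i)) F = MvPowerSeries.X i
      rw [ZZ.sub_sub_eq hvF, ZZ.sub_X, ZZ.sub_mul hvF, ZZ.sub_tT, ← hNF i]
      show (MvPowerSeries.X i + tT * polyToSer (Nt i)) - tT * polyToSer (Nt i) =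
        MvPowerSeries.X i
      ring
    · intro i
      show sub (MvPowerSeries.X i + tT * polyToSer (Nt i)) G = MvPowerSeries.X i
      rw [ZZ.sub_add hvG, ZZ.sub_X, ZZ.sub_mul hvG, ZZ.sub_tT, hNG i]
      show (MvPowerSeries.X i - tT * inclZ (H i)) + tT * inclZ (H i) = MvPowerSeries.X i
      ring
/-- for `N_t ∈ ℂ[t][[z]]` of order at least 1 in `z`, the following are
equivalent: (1) `z + tN_t(z)` is the formal inverse of `z - tH(z)` for some `H ∈ ℂ[[z]]ⁿ`;
(2) for every `U(z) ∈ ℂ[[z]]`, the series `U(z + tN_t(z))` is the unique power series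
solution of the Cauchy problem `∂U_t/∂t = ⟨∇U_t, N_t⟩`, `U_{t=0} = U`. -/
theorem stmt12 {n : ℕ} (Nt : Fin n → PSZP n) (hNt : vordGE 1 Nt) :
    (∃ H : Fin n → MvPowerSeries (Fin n) ℂ,
        IsInv (fun i => MvPowerSeries.X i - tT * inclZ (H i))
          (fun i => MvPowerSeries.X i + tT * polyToSer (Nt i))) ↔
      ∀ U : MvPowerSeries (Fin n) ℂ,
        (dt (sub (inclZ U) fun j => MvPowerSeries.X j + tT * polyToSer (Nt j)) =
            ∑ i, pd i (sub (inclZ U) fun j => MvPowerSeries.X j + tT * polyToSer (Nt j)) *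
              polyToSer (Nt i) ∧
          evalT0 (sub (inclZ U) fun j => MvPowerSeries.X j + tT * polyToSer (Nt j)) = U) ∧
        ∀ W : PSZT n,
          (dt W = ∑ i, pd i W * polyToSer (Nt i) ∧ evalT0 W = U) →
            W = sub (inclZ U) fun j => MvPowerSeries.X j + tT * polyToSer (Nt j) := by
  exact stmt12' Nt hNt
end
end

section
/- Let F(z) = z − H(z) with H ∈ ℂ[[z]]^{×n}, o(H) ≥ 1, and let G(z) = z + N(z) be its formal compositional inverse. Then the Jacobian matrix JF(z) is symmetric if and only if JG(z) is symmetric; equivalently, H = ∇P for some P ∈ ℂ[[z]] if and only if N = ∇Q for some Q ∈ ℂ[[z]]. -/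
/-
Common setup: `ℂ[[z]]` is `MvPowerSeries (Fin n) ℂ`; `ℂ[[z,t]]` is realized as
`MvPowerSeries (Fin n) (PowerSeries ℂ)` (power series in `z` with coefficients in `ℂ[[t]]`),
and `ℂ[t][[z]]` as `MvPowerSeries (Fin n) (Polynomial ℂ)`.  Substitution, partial
derivatives, Jacobian matrices, order and compositional inverses are defined below.
-/

noncomputable section

namespace S13
open MvPowerSeries Finset
variable {n : ℕ}
abbrev PS (n : ℕ) := MvPowerSeries (Fin n) ℂ

def deg (d : Fin n →₀ ℕ) : ℕ := d.sum fun _ e => e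

lemma deg_eq (d : Fin n →₀ ℕ) : deg d = ∑ i, d i := by
  rw [deg, Finsupp.sum_fintype]; intro; rfl

lemma deg_add (d e : Fin n →₀ ℕ) : deg (d + e) = deg d + deg e := by
  simp [deg_eq, Finset.sum_add_distrib]

lemma deg_single (i : Fin n) : deg (Finsupp.single i 1) = 1 := by
  simp [deg]

lemma deg_eq_zero {d : Fin n →₀ ℕ} (h : deg d = 0) : d = 0 := by
  rw [deg_eq, Finset.sum_eq_zero_iff] at h
  ext i; exact h i (Finset.mem_univ i)

lemma coeff_pd (i : Fin n) (f : PS n) (d : Fin n →₀ ℕ) :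
    MvPowerSeries.coeff (R := ℂ) d (pd i f) =
      ((d i + 1 : ℕ) : ℂ) * MvPowerSeries.coeff (R := ℂ) (d + Finsupp.single i 1) f := by
  have h : MvPowerSeries.coeff (R := ℂ) d (pd i f)
      = (d i + 1 : ℕ) • MvPowerSeries.coeff (R := ℂ) (d + Finsupp.single i 1) f := rfl
  rw [h, nsmul_eq_mul]

lemma pd_ext {f g : PS n} (h : ∀ d, MvPowerSeries.coeff (R := ℂ) d f = MvPowerSeries.coeff (R := ℂ) d g) :
    f = g := MvPowerSeries.ext h

lemma pd_add (i : Fin n) (f g : PS n) : pd i (f + g) = pd i f + pd i g := by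
  apply pd_ext; intro d; simp [coeff_pd, map_add]; ring

lemma pd_neg (i : Fin n) (f : PS n) : pd i (-f) = -(pd i f) := by
  apply pd_ext; intro d; simp [coeff_pd]

lemma pd_sub (i : Fin n) (f g : PS n) : pd i (f - g) = pd i f - pd i g := by
  apply pd_ext; intro d; simp [coeff_pd, map_sub]; ring

lemma pd_one (i : Fin n) : pd i (1 : PS n) = 0 := by
  apply pd_ext; intro d
  rw [coeff_pd]
  have : (d + Finsupp.single i 1) ≠ 0 := by
    intro h
    have := DFunLike.congr_fun h i
    simp [Finsupp.single_apply] at this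
  simp [MvPowerSeries.coeff_one, this]

lemma pd_C (i : Fin n) (c : ℂ) : pd i (MvPowerSeries.C (σ := Fin n) (R := ℂ) c) = 0 := by
  apply pd_ext; intro d
  rw [coeff_pd]
  have : (d + Finsupp.single i 1) ≠ 0 := by
    intro h
    have := DFunLike.congr_fun h i
    simp [Finsupp.single_apply] at this
  simp [MvPowerSeries.coeff_C, this]


lemma fs_add_sub (d : Fin n →₀ ℕ) (k : Fin n) : d + Finsupp.single k 1 - Finsupp.single k 1 = d := by
  ext i; simp

lemma fs_sub_add {d : Fin n →₀ ℕ} {k : Fin n} (h : d k ≠ 0) :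
    d - Finsupp.single k 1 + Finsupp.single k 1 = d := by
  ext i
  by_cases hik : k = i
  · subst hik; simp; omega
  · simp [Finsupp.single_apply, hik]

lemma shift (j : Fin n) (d : Fin n →₀ ℕ) (φ : (Fin n →₀ ℕ) × (Fin n →₀ ℕ) → ℂ) :
    Finset.sum (Finset.HasAntidiagonal.antidiagonal (d + Finsupp.single j 1))
      (fun p => (((p.1 : Fin n →₀ ℕ) j : ℕ) : ℂ) * φ p)
      = Finset.sum (Finset.HasAntidiagonal.antidiagonal d)
      (fun p => (((p.1 : Fin n →₀ ℕ) j + 1 : ℕ) : ℂ) * φ (p.1 + Finsupp.single j 1, p.2)) := by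
  rw [← Finset.sum_filter_of_ne (p := fun p : (Fin n →₀ ℕ) × (Fin n →₀ ℕ) => p.1 j ≠ 0)
      (fun x _ hx h0 => by simp [h0] at hx)]
  refine (Finset.sum_nbij' (fun p => (p.1 - Finsupp.single j 1, p.2))
    (fun p => (p.1 + Finsupp.single j 1, p.2)) ?_ ?_ ?_ ?_ ?_).symm.symm
  · rintro ⟨p, q⟩ hp
    simp only [Finset.mem_filter, Finset.HasAntidiagonal.mem_antidiagonal] at hp ⊢
    obtain ⟨h1, h2⟩ := hp
    ext i
    have h3 := DFunLike.congr_fun h1 i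
    simp only [Finsupp.add_apply, Finsupp.sub_apply, Finsupp.single_apply] at h3 ⊢
    by_cases hij : j = i
    · subst hij
      simp at h3 ⊢
      omega
    · simp [hij] at h3 ⊢
      omega
  · rintro ⟨p, q⟩ hp
    simp only [Finset.HasAntidiagonal.mem_antidiagonal] at hp
    simp only [Finset.mem_filter, Finset.HasAntidiagonal.mem_antidiagonal]
    constructor
    · ext i
      have h3 := DFunLike.congr_fun hp i
      simp only [Finsupp.add_apply, Finsupp.single_apply] at h3 ⊢
      by_cases hij : j = i
      · subst hij; simp at h3 ⊢; omega
      · simp [hij] at h3 ⊢; omega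
    · simp
  · rintro ⟨p, q⟩ hp
    simp only [Finset.mem_filter, Finset.HasAntidiagonal.mem_antidiagonal] at hp
    simp [fs_sub_add hp.2]
  · rintro ⟨p, q⟩ _
    simp [fs_add_sub]
  · rintro ⟨p, q⟩ hp
    simp only [Finset.mem_filter, Finset.HasAntidiagonal.mem_antidiagonal] at hp
    have h4 : (p - (Finsupp.single j 1 : Fin n →₀ ℕ)) j + 1 = p j := by
      have := hp.2; simp; omega
    simp only [h4, fs_sub_add hp.2]


end S13

namespace S13
open MvPowerSeries Finset
variable {n : ℕ}

lemma sum_antidiag_swap (m : Fin n →₀ ℕ) (ψ : (Fin n →₀ ℕ) × (Fin n →₀ ℕ) → ℂ) :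
    Finset.sum (Finset.HasAntidiagonal.antidiagonal m) (fun p => ψ p.swap)
      = Finset.sum (Finset.HasAntidiagonal.antidiagonal m) (fun p => ψ p) := by
  conv_rhs => rw [← Finset.HasAntidiagonal.map_swap_antidiagonal (n := m)]
  rw [Finset.sum_map]
  rfl

lemma shift2 (j : Fin n) (d : Fin n →₀ ℕ) (φ : (Fin n →₀ ℕ) × (Fin n →₀ ℕ) → ℂ) :
    Finset.sum (Finset.HasAntidiagonal.antidiagonal (d + Finsupp.single j 1))
      (fun p => (((p.2 : Fin n →₀ ℕ) j : ℕ) : ℂ) * φ p)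
      = Finset.sum (Finset.HasAntidiagonal.antidiagonal d)
      (fun p => (((p.2 : Fin n →₀ ℕ) j + 1 : ℕ) : ℂ) * φ (p.1, p.2 + Finsupp.single j 1)) := by
  rw [← sum_antidiag_swap (d + Finsupp.single j 1) (fun p => ((p.2 j : ℕ) : ℂ) * φ p)]
  rw [show (fun p : (Fin n →₀ ℕ) × (Fin n →₀ ℕ) => ((p.swap.2 j : ℕ) : ℂ) * φ p.swap)
      = (fun p : (Fin n →₀ ℕ) × (Fin n →₀ ℕ) => ((p.1 j : ℕ) : ℂ) * (φ ∘ Prod.swap) p) from rfl]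
  rw [shift j d (φ ∘ Prod.swap)]
  rw [← sum_antidiag_swap d (fun p => ((p.2 j + 1 : ℕ) : ℂ) * φ (p.1, p.2 + Finsupp.single j 1))]
  rfl

lemma pd_mul (j : Fin n) (f g : PS n) : pd j (f * g) = pd j f * g + f * pd j g := by
  apply pd_ext; intro d
  rw [map_add, coeff_pd, MvPowerSeries.coeff_mul, MvPowerSeries.coeff_mul,
    MvPowerSeries.coeff_mul, Finset.mul_sum]
  have key : ∀ p ∈ Finset.HasAntidiagonal.antidiagonal (d + Finsupp.single j 1),
      ((d j + 1 : ℕ) : ℂ) * (MvPowerSeries.coeff (R := ℂ) p.1 f * MvPowerSeries.coeff (R := ℂ) p.2 g)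
      = ((p.1 j : ℕ) : ℂ) * (MvPowerSeries.coeff (R := ℂ) p.1 f * MvPowerSeries.coeff (R := ℂ) p.2 g)
        + ((p.2 j : ℕ) : ℂ) * (MvPowerSeries.coeff (R := ℂ) p.1 f * MvPowerSeries.coeff (R := ℂ) p.2 g) := by
    intro p hp
    rw [Finset.HasAntidiagonal.mem_antidiagonal] at hp
    have h1 := DFunLike.congr_fun hp j
    simp only [Finsupp.add_apply, Finsupp.single_apply, if_pos rfl] at h1
    have h2 : ((d j + 1 : ℕ) : ℂ) = ((p.1 j : ℕ) : ℂ) + ((p.2 j : ℕ) : ℂ) := by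
      push_cast
      exact_mod_cast congrArg (Nat.cast : ℕ → ℂ) h1.symm
    rw [h2]; ring
  rw [Finset.sum_congr rfl key, Finset.sum_add_distrib,
    shift j d (fun p => MvPowerSeries.coeff (R := ℂ) p.1 f * MvPowerSeries.coeff (R := ℂ) p.2 g),
    shift2 j d (fun p => MvPowerSeries.coeff (R := ℂ) p.1 f * MvPowerSeries.coeff (R := ℂ) p.2 g)]
  congr 1 <;> apply Finset.sum_congr rfl <;> intro p _ <;> rw [coeff_pd] <;> ring

end S13

namespace S13
open MvPowerSeries Finset
variable {n : ℕ}

lemma pd_prod (j : Fin n) (s : Finset (Fin n)) (g : Fin n → PS n) :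
    pd j (∏ i ∈ s, g i) = ∑ k ∈ s, pd j (g k) * ∏ i ∈ s.erase k, g i := by
  induction s using Finset.induction_on with
  | empty => simp [pd_one]
  | insert _ _ hx ih =>
    rename_i x s
    rw [Finset.prod_insert hx, pd_mul, ih, Finset.sum_insert hx, Finset.erase_insert hx,
      Finset.mul_sum]
    congr 1
    apply Finset.sum_congr rfl
    intro k hk
    have hkx : k ≠ x := fun h => hx (h ▸ hk)
    rw [Finset.erase_insert_of_ne hkx.symm,
      Finset.prod_insert (fun h => hx (Finset.mem_of_mem_erase h))]
    ring

lemma pd_pow_succ (j : Fin n) (f : PS n) (e : ℕ) :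
    pd j (f ^ (e + 1)) = ((e + 1 : ℕ) : PS n) * (f ^ e * pd j f) := by
  induction e with
  | zero => simp [pow_one, pd_mul]
  | succ e ih =>
    rw [pow_succ, pd_mul, ih]
    push_cast
    ring

lemma pd_X (i k : Fin n) : pd i (MvPowerSeries.X k : PS n) = if k = i then 1 else 0 := by
  apply pd_ext; intro d
  rw [coeff_pd, MvPowerSeries.coeff_X]
  by_cases hik : k = i
  · subst hik
    rw [if_pos rfl]
    by_cases hd : d = 0
    · subst hd; simp
    · have hne : ¬((d + Finsupp.single k 1 : Fin n →₀ ℕ) = Finsupp.single k 1) := by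
        intro h; apply hd; ext i'
        have h2 := DFunLike.congr_fun h i'
        simp only [Finsupp.add_apply] at h2
        simp only [Finsupp.coe_zero, Pi.zero_apply]
        omega
      rw [if_neg hne, MvPowerSeries.coeff_one, if_neg hd, mul_zero]
  · rw [if_neg hik]
    have hne : ¬((d + Finsupp.single i 1 : Fin n →₀ ℕ) = Finsupp.single k 1) := by
      intro h
      have h2 := DFunLike.congr_fun h i
      simp only [Finsupp.add_apply, Finsupp.single_apply, if_pos rfl] at h2
      rw [if_neg hik] at h2
      simp at h2
    rw [if_neg hne, mul_zero, map_zero]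

lemma pd_prodpow (j : Fin n) (a : Fin n → PS n) (D : Fin n →₀ ℕ) :
    pd j (∏ i, a i ^ D i) =
      ∑ k, ((D k : ℕ) : PS n) *
        ((∏ i, a i ^ ((D - Finsupp.single k 1 : Fin n →₀ ℕ) i)) * pd j (a k)) := by
  rw [pd_prod]
  apply Finset.sum_congr rfl
  intro k _
  by_cases hk : D k = 0
  · simp [hk, pd_one]
  · obtain ⟨e, he⟩ : ∃ e, D k = e + 1 := ⟨D k - 1, by omega⟩
    have hprod : (∏ i, a i ^ ((D - Finsupp.single k 1 : Fin n →₀ ℕ) i))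
        = a k ^ e * ∏ i ∈ Finset.univ.erase k, a i ^ D i := by
      rw [← Finset.mul_prod_erase Finset.univ
        (fun i => a i ^ ((D - Finsupp.single k 1 : Fin n →₀ ℕ) i)) (Finset.mem_univ k)]
      congr 1
      · have h1 : (D - Finsupp.single k 1 : Fin n →₀ ℕ) k = e := by simp; omega
        rw [h1]
      · apply Finset.prod_congr rfl
        intro i hi
        have h2 : (D - Finsupp.single k 1 : Fin n →₀ ℕ) i = D i := by
          simp [Finsupp.single_apply, Ne.symm (Finset.ne_of_mem_erase hi)]
        rw [h2]
    rw [hprod, he, pd_pow_succ]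
    push_cast
    ring
end S13

namespace S13
open MvPowerSeries Finset
variable {n : ℕ}

lemma degsum (d : Fin n →₀ ℕ) : (d.sum fun _ e => e) = deg d := rfl

lemma ordGE_mul {k l : ℕ} {f g : PS n} (hf : ordGE k f) (hg : ordGE l g) :
    ordGE (k + l) (f * g) := by
  intro d hd
  rw [MvPowerSeries.coeff_mul]
  apply Finset.sum_eq_zero
  intro p hp
  rw [Finset.HasAntidiagonal.mem_antidiagonal] at hp
  have hdeg : deg p.1 + deg p.2 = deg d := by rw [← deg_add, hp]
  rw [degsum] at hd
  by_cases h1 : deg p.1 < k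
  · rw [hf p.1 (by rw [degsum]; omega), zero_mul]
  · rw [hg p.2 (by rw [degsum]; omega), mul_zero]

lemma ordGE_prodpow {a : Fin n → PS n} (ha : vordGE 1 a) (D : Fin n →₀ ℕ) :
    ordGE (deg D) (∏ i, a i ^ D i) := by
  have key : ∀ s : Finset (Fin n), ordGE (∑ i ∈ s, D i) (∏ i ∈ s, a i ^ D i) := by
    intro s
    induction s using Finset.induction_on with
    | empty => intro d hd; simp at hd
    | insert _ _ hx ih =>
      rename_i x s
      rw [Finset.prod_insert hx, Finset.sum_insert hx]
      have hpow : ordGE (D x) (a x ^ D x) := by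
        induction (D x) with
        | zero => intro d hd; simp at hd
        | succ e ihe =>
          rw [pow_succ]
          exact ordGE_mul ihe (ha x)
      exact ordGE_mul hpow ih
  rw [show deg D = ∑ i, D i from deg_eq D]
  exact key Finset.univ

lemma coeff_prodpow_zero {a : Fin n → PS n} (ha : vordGE 1 a) {m D : Fin n →₀ ℕ}
    (h : deg m < deg D) : MvPowerSeries.coeff (R := ℂ) m (∏ i, a i ^ D i) = 0 :=
  ordGE_prodpow ha D m h

lemma finite_deg_le (s : ℕ) : {d : Fin n →₀ ℕ | deg d ≤ s}.Finite := by
  apply Set.Finite.subset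
    (Finset.Iic (Finsupp.equivFunOnFinite.symm (fun _ : Fin n => s))).finite_toSet
  intro d hd
  simp only [Set.mem_setOf_eq] at hd
  simp only [Finset.coe_Iic, Set.mem_Iic]
  intro i
  have : d i ≤ deg d := by
    rw [deg_eq]
    exact Finset.single_le_sum (fun _ _ => Nat.zero_le _) (Finset.mem_univ i)
  simpa using le_trans this hd

def bigT (m : Fin n →₀ ℕ) : Finset (Fin n →₀ ℕ) := (finite_deg_le (n := n) (deg m)).toFinset

lemma coeff_sub_eq {f : PS n} {a : Fin n → PS n} (ha : vordGE 1 a) (m : Fin n →₀ ℕ) :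
    MvPowerSeries.coeff (R := ℂ) m (sub f a)
      = ∑ d ∈ bigT m, MvPowerSeries.coeff (R := ℂ) d f *
          MvPowerSeries.coeff (R := ℂ) m (∏ i, a i ^ d i) := by
  have h0 : MvPowerSeries.coeff (R := ℂ) m (sub f a)
      = ∑ᶠ d, MvPowerSeries.coeff (R := ℂ) d f * MvPowerSeries.coeff (R := ℂ) m (∏ i, a i ^ d i) := rfl
  rw [h0]
  apply finsum_eq_sum_of_support_subset
  intro d hd
  simp only [Function.mem_support] at hd
  simp only [bigT, Finset.coe_sort_coe, Set.Finite.coe_toFinset, Set.mem_setOf_eq]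
  by_contra hc
  exact hd (by rw [coeff_prodpow_zero ha (by omega), mul_zero])

lemma sub_add {f g : PS n} {a : Fin n → PS n} (ha : vordGE 1 a) :
    sub (f + g) a = sub f a + sub g a := by
  apply pd_ext; intro m
  rw [map_add, coeff_sub_eq ha, coeff_sub_eq ha, coeff_sub_eq ha, ← Finset.sum_add_distrib]
  apply Finset.sum_congr rfl
  intro d _
  rw [map_add]; ring

lemma sub_zero' {a : Fin n → PS n} : sub (0 : PS n) a = 0 := by
  apply pd_ext; intro m
  have h0 : MvPowerSeries.coeff (R := ℂ) m (sub (0 : PS n) a)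
      = ∑ᶠ d : Fin n →₀ ℕ, MvPowerSeries.coeff (R := ℂ) d (0 : PS n) *
          MvPowerSeries.coeff (R := ℂ) m (∏ i, a i ^ d i) := rfl
  rw [h0, map_zero]
  apply finsum_eq_zero_of_forall_eq_zero
  intro d; rw [map_zero, zero_mul]

lemma sub_neg {f : PS n} {a : Fin n → PS n} (ha : vordGE 1 a) : sub (-f) a = -(sub f a) := by
  apply pd_ext; intro m
  rw [map_neg, coeff_sub_eq ha, coeff_sub_eq ha, ← Finset.sum_neg_distrib]
  apply Finset.sum_congr rfl
  intro d _
  rw [map_neg]; ring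

lemma sub_sub' {f g : PS n} {a : Fin n → PS n} (ha : vordGE 1 a) :
    sub (f - g) a = sub f a - sub g a := by
  rw [sub_eq_add_neg, sub_add ha, sub_neg ha, ← sub_eq_add_neg]

lemma sub_monomial (D : Fin n →₀ ℕ) (c : ℂ) (a : Fin n → PS n) :
    sub ((MvPowerSeries.monomial (R := ℂ) D) c) a = MvPowerSeries.C (σ := Fin n) (R := ℂ) c * ∏ i, a i ^ D i := by
  apply pd_ext; intro m
  have h0 : MvPowerSeries.coeff (R := ℂ) m (sub ((MvPowerSeries.monomial (R := ℂ) D) c) a)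
      = ∑ᶠ d : Fin n →₀ ℕ, MvPowerSeries.coeff (R := ℂ) d ((MvPowerSeries.monomial (R := ℂ) D) c) *
          MvPowerSeries.coeff (R := ℂ) m (∏ i, a i ^ d i) := rfl
  rw [h0, finsum_eq_single _ D (fun x hx => by
    rw [MvPowerSeries.coeff_monomial, if_neg hx, zero_mul])]
  rw [MvPowerSeries.coeff_monomial, if_pos rfl, MvPowerSeries.coeff_C_mul]

lemma sub_coeff_zero {s : ℕ} {f : PS n} {a : Fin n → PS n} (ha : vordGE 1 a)
    (hf : ordGE s f) {m : Fin n →₀ ℕ} (hm : deg m < s) :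
    MvPowerSeries.coeff (R := ℂ) m (sub f a) = 0 := by
  have h0 : MvPowerSeries.coeff (R := ℂ) m (sub f a)
      = ∑ᶠ d : Fin n →₀ ℕ, MvPowerSeries.coeff (R := ℂ) d f *
          MvPowerSeries.coeff (R := ℂ) m (∏ i, a i ^ d i) := rfl
  rw [h0]
  apply finsum_eq_zero_of_forall_eq_zero
  intro d
  by_cases hd : deg d < s
  · rw [hf d hd, zero_mul]
  · rw [coeff_prodpow_zero ha (by omega), mul_zero]

lemma ordGE_pd {s : ℕ} {f : PS n} (hf : ordGE (s + 1) f) (k : Fin n) : ordGE s (pd k f) := by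
  intro d hd
  rw [degsum] at hd
  rw [coeff_pd, hf _ (by rw [degsum, deg_add, deg_single]; omega), mul_zero]

lemma sub_X (i : Fin n) (a : Fin n → PS n) : sub (MvPowerSeries.X i) a = a i := by
  have hX : (MvPowerSeries.X i : PS n) = (MvPowerSeries.monomial (R := ℂ) (Finsupp.single i 1)) 1 :=
    rfl
  rw [hX, sub_monomial, map_one, one_mul]
  rw [Finset.prod_eq_single i (fun b _ hb => by
      rw [Finsupp.single_apply, if_neg (fun h => hb h.symm), pow_zero])
    (fun h => absurd (Finset.mem_univ i) h)]
  rw [Finsupp.single_apply, if_pos rfl, pow_one]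

end S13

namespace S13
open MvPowerSeries Finset
variable {n : ℕ}

lemma pd_monomial (k : Fin n) (D : Fin n →₀ ℕ) (c : ℂ) :
    pd k ((MvPowerSeries.monomial (R := ℂ) D) c)
      = (MvPowerSeries.monomial (R := ℂ) (D - Finsupp.single k 1)) ((D k : ℂ) * c) := by
  apply pd_ext; intro d
  rw [coeff_pd, MvPowerSeries.coeff_monomial, MvPowerSeries.coeff_monomial]
  by_cases h : d + Finsupp.single k 1 = D
  · have hDk : D k = d k + 1 := by
      have := DFunLike.congr_fun h k
      simpa using this.symm
    have hd : d = D - Finsupp.single k 1 := by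
      rw [← h, fs_add_sub]
    rw [if_pos h, if_pos hd, hDk]
  · rw [if_neg h, mul_zero]
    by_cases hd : d = D - Finsupp.single k 1
    · have hDk : D k = 0 := by
        by_contra hc
        exact h (by rw [hd, fs_sub_add hc])
      rw [if_pos hd, hDk]
      simp
    · rw [if_neg hd]

def trunc (s : ℕ) (f : PS n) : PS n :=
  ∑ d ∈ (finite_deg_le (n := n) s).toFinset, (MvPowerSeries.monomial (R := ℂ) d)
    (MvPowerSeries.coeff (R := ℂ) d f)

lemma ordGE_trunc_sub (s : ℕ) (f : PS n) : ordGE (s + 1) (f - trunc s f) := by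
  intro d hd
  rw [degsum] at hd
  have hdle : deg d ≤ s := by omega
  rw [map_sub]
  have : MvPowerSeries.coeff (R := ℂ) d (trunc s f) = MvPowerSeries.coeff (R := ℂ) d f := by
    rw [trunc, map_sum]
    rw [Finset.sum_eq_single d
      (fun e _ he => by rw [MvPowerSeries.coeff_monomial, if_neg (fun hh => he hh.symm)])
      (fun hnd => absurd ((finite_deg_le s).mem_toFinset.mpr hdle) hnd)]
    rw [MvPowerSeries.coeff_monomial, if_pos rfl]
  rw [this, sub_self]

lemma chain_monomial {a : Fin n → PS n} (j : Fin n) (D : Fin n →₀ ℕ) (c : ℂ) :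
    pd j (sub ((MvPowerSeries.monomial (R := ℂ) D) c) a)
      = ∑ k, sub (pd k ((MvPowerSeries.monomial (R := ℂ) D) c)) a * pd j (a k) := by
  rw [sub_monomial]
  have hC : ∀ f : PS n, pd j (MvPowerSeries.C (σ := Fin n) (R := ℂ) c * f)
      = MvPowerSeries.C (σ := Fin n) (R := ℂ) c * pd j f := by
    intro f; rw [pd_mul, pd_C, zero_mul, zero_add]
  rw [hC, pd_prodpow, Finset.mul_sum]
  apply Finset.sum_congr rfl
  intro k _
  rw [pd_monomial, sub_monomial, map_mul]
  have : (MvPowerSeries.C (σ := Fin n) (R := ℂ)) ((D k : ℂ)) = ((D k : ℕ) : PS n) := by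
    push_cast; rfl
  rw [this]
  ring

lemma chain {a : Fin n → PS n} (ha : vordGE 1 a) (f : PS n) (j : Fin n) :
    pd j (sub f a) = ∑ k, sub (pd k f) a * pd j (a k) := by
  apply pd_ext; intro m
  set s : ℕ := deg m + 1 with hs
  set r : PS n := f - trunc s f with hr
  have hofr : ordGE (s + 1) r := ordGE_trunc_sub s f
  have hf : f = trunc s f + r := by rw [hr]; ring
  -- chain rule holds exactly for the truncation
  have htr : pd j (sub (trunc s f) a) = ∑ k, sub (pd k (trunc s f)) a * pd j (a k) := by
    rw [trunc]
    generalize (finite_deg_le (n := n) s).toFinset = T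
    induction T using Finset.induction_on with
    | empty =>
      simp only [Finset.sum_empty]
      rw [sub_zero']
      have : ∀ k, pd k (0 : PS n) = 0 := fun k => by
        apply pd_ext; intro d; rw [coeff_pd]; simp
      simp [this, sub_zero']
    | insert _ _ hx ih =>
      rename_i x T
      rw [Finset.sum_insert hx]
      rw [sub_add ha, pd_add, ih, chain_monomial]
      rw [← Finset.sum_add_distrib]
      apply Finset.sum_congr rfl
      intro k _
      rw [pd_add, sub_add ha]
      ring
  -- now compare coefficients at m
  rw [hf, sub_add ha, pd_add, map_add, htr]
  have hzero1 : MvPowerSeries.coeff (R := ℂ) m (pd j (sub r a)) = 0 := by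
    rw [coeff_pd, sub_coeff_zero ha hofr (by rw [deg_add, deg_single]; omega), mul_zero]
  rw [hzero1, add_zero, map_sum, map_sum]
  apply Finset.sum_congr rfl
  intro k _
  rw [pd_add, sub_add ha, add_mul, map_add]
  have hzero2 : MvPowerSeries.coeff (R := ℂ) m (sub (pd k r) a * pd j (a k)) = 0 := by
    rw [MvPowerSeries.coeff_mul]
    apply Finset.sum_eq_zero
    intro p hp
    rw [Finset.HasAntidiagonal.mem_antidiagonal] at hp
    have : deg p.1 ≤ deg m := by
      have := deg_add p.1 p.2
      rw [hp] at this; omega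
    rw [sub_coeff_zero ha (ordGE_pd hofr k) (by omega), zero_mul]
  rw [hzero2, add_zero]

end S13

namespace S13
open MvPowerSeries Finset
variable {n : ℕ}

lemma pd_zero (i : Fin n) : pd i (0 : PS n) = 0 := by
  apply pd_ext; intro d; rw [coeff_pd]; simp

lemma pd_sum (i : Fin n) (s : Finset (Fin n)) (g : Fin n → PS n) :
    pd i (∑ k ∈ s, g k) = ∑ k ∈ s, pd i (g k) := by
  induction s using Finset.induction_on with
  | empty => simp [pd_zero]
  | insert _ _ hx ih => rename_i x s; rw [Finset.sum_insert hx, Finset.sum_insert hx, pd_add, ih]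

lemma pd_comm (i j : Fin n) (P : PS n) : pd j (pd i P) = pd i (pd j P) := by
  apply pd_ext; intro d
  rw [coeff_pd, coeff_pd, coeff_pd, coeff_pd]
  have hadd : d + Finsupp.single j 1 + Finsupp.single i 1
      = d + Finsupp.single i 1 + Finsupp.single j 1 := by
    rw [add_right_comm]
  rw [hadd]
  by_cases hij : i = j
  · subst hij; ring
  · have h1 : (d + Finsupp.single j 1 : Fin n →₀ ℕ) i = d i := by
      simp [Finsupp.single_apply, Ne.symm hij]
    have h2 : (d + Finsupp.single i 1 : Fin n →₀ ℕ) j = d j := by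
      simp [Finsupp.single_apply, hij]
    rw [h1, h2]; ring

lemma symm_of_grad {H : Fin n → PS n} (P : PS n) (hP : ∀ i, H i = pd i P) :
    ∀ i j, pd j (H i) = pd i (H j) := by
  intro i j; rw [hP i, hP j, pd_comm]

-- well-definedness for the Poincaré construction
lemma symm_W {H : Fin n → PS n} (hsym : ∀ i j, pd j (H i) = pd i (H j))
    {m : Fin n →₀ ℕ} {i j : Fin n} (hi : m i ≠ 0) (hj : m j ≠ 0) :
    ((m j : ℕ) : ℂ) * MvPowerSeries.coeff (R := ℂ) (m - Finsupp.single i 1) (H i)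
      = ((m i : ℕ) : ℂ) * MvPowerSeries.coeff (R := ℂ) (m - Finsupp.single j 1) (H j) := by
  by_cases hij : i = j
  · subst hij; rfl
  · set e : Fin n →₀ ℕ := m - Finsupp.single i 1 - Finsupp.single j 1 with he
    have hmi : (m - Finsupp.single i 1 : Fin n →₀ ℕ) j = m j := by
      simp [Finsupp.single_apply, hij]
    have hmj : (m - Finsupp.single j 1 : Fin n →₀ ℕ) i = m i := by
      simp [Finsupp.single_apply, Ne.symm hij]
    have h1 : e + Finsupp.single j 1 = m - Finsupp.single i 1 :=
      fs_sub_add (by rw [hmi]; exact hj)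
    have h2 : e + Finsupp.single i 1 = m - Finsupp.single j 1 := by
      rw [he, tsub_right_comm]
      exact fs_sub_add (by rw [hmj]; exact hi)
    have h3 : e j + 1 = m j := by
      have : e j = (m - Finsupp.single i 1 : Fin n →₀ ℕ) j - 1 := by simp [he]
      rw [this, hmi]; omega
    have h4 : e i + 1 = m i := by
      rw [he, Finsupp.tsub_apply, Finsupp.tsub_apply, Finsupp.single_apply,
        Finsupp.single_apply, if_pos rfl, if_neg (Ne.symm hij)]
      omega
    have hkey := congrArg (MvPowerSeries.coeff (R := ℂ) e) (hsym i j)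
    rw [coeff_pd, coeff_pd, h1, h2] at hkey
    rw [← h3, ← h4] at *
    exact hkey
  
def pick (m : Fin n →₀ ℕ) (h : m ≠ 0) : Fin n :=
  m.support.min' (Finsupp.support_nonempty_iff.mpr h)

lemma pick_spec (m : Fin n →₀ ℕ) (h : m ≠ 0) : m (pick m h) ≠ 0 :=
  Finsupp.mem_support_iff.mp (m.support.min'_mem _)

def Pc (H : Fin n → PS n) : PS n :=
  PSmk fun m => if h : m = 0 then 0 else
    (((m (pick m h) : ℕ) : ℂ))⁻¹ *
      MvPowerSeries.coeff (R := ℂ) (m - Finsupp.single (pick m h) 1) (H (pick m h))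

lemma coeff_Pc (H : Fin n → PS n) (m : Fin n →₀ ℕ) :
    MvPowerSeries.coeff (R := ℂ) m (Pc H) = if h : m = 0 then 0 else
    (((m (pick m h) : ℕ) : ℂ))⁻¹ *
      MvPowerSeries.coeff (R := ℂ) (m - Finsupp.single (pick m h) 1) (H (pick m h)) := rfl

lemma grad_of_symm {H : Fin n → PS n} (hsym : ∀ i j, pd j (H i) = pd i (H j)) :
    ∀ i, H i = pd i (Pc H) := by
  intro i
  apply pd_ext; intro d
  rw [coeff_pd, coeff_Pc]
  set m : Fin n →₀ ℕ := d + Finsupp.single i 1 with hm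
  have hmi : m i = d i + 1 := by simp [hm]
  have hm0 : m ≠ 0 := by
    intro h
    have := DFunLike.congr_fun h i
    rw [hmi] at this
    simp at this
  rw [dif_neg hm0]
  set j : Fin n := pick m hm0 with hjdef
  have hj : m j ≠ 0 := pick_spec m hm0
  have hW := symm_W hsym (show m i ≠ 0 by omega) hj
  have hd : m - Finsupp.single i 1 = d := fs_add_sub d i
  rw [hd] at hW
  have hcast : ((d i + 1 : ℕ) : ℂ) = ((m i : ℕ) : ℂ) := by rw [hmi]
  rw [hcast]
  have hmjne : ((m j : ℕ) : ℂ) ≠ 0 := Nat.cast_ne_zero.mpr hj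
  calc MvPowerSeries.coeff (R := ℂ) d (H i)
      = ((m j : ℕ) : ℂ)⁻¹ * (((m j : ℕ) : ℂ) * MvPowerSeries.coeff (R := ℂ) d (H i)) := by
        rw [← mul_assoc, inv_mul_cancel₀ hmjne, one_mul]
    _ = ((m j : ℕ) : ℂ)⁻¹ * (((m i : ℕ) : ℂ) *
          MvPowerSeries.coeff (R := ℂ) (m - Finsupp.single j 1) (H j)) := by rw [hW]
    _ = ((m i : ℕ) : ℂ) * (((m j : ℕ) : ℂ)⁻¹ *
          MvPowerSeries.coeff (R := ℂ) (m - Finsupp.single j 1) (H j)) := by ring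

end S13

namespace S13
open MvPowerSeries Finset
variable {n : ℕ}

lemma ordGE_X (i : Fin n) : ordGE 1 (MvPowerSeries.X i : PS n) := by
  intro d hd
  rw [degsum] at hd
  have hd0 : d = 0 := deg_eq_zero (by omega)
  subst hd0
  rw [MvPowerSeries.coeff_X, if_neg (by
    intro h
    have := DFunLike.congr_fun h i
    simp at this)]

lemma vordGE_G {N : Fin n → PS n} (hN : vordGE 1 N) :
    vordGE 1 (fun k => (MvPowerSeries.X k : PS n) + N k) := by
  intro k d hd
  rw [map_add, ordGE_X k d hd, hN k d hd, add_zero]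

-- `q = (1/2) ∑ X k ^ 2`, with `pd i q = X i`
def halfsq : PS n := MvPowerSeries.C (σ := Fin n) (R := ℂ) (1 / 2) * ∑ k, (MvPowerSeries.X k : PS n) ^ 2

lemma pd_halfsq (i : Fin n) : pd i (halfsq : PS n) = MvPowerSeries.X i := by
  rw [halfsq, pd_mul, pd_C, zero_mul, zero_add, pd_sum]
  have hterm : ∀ k, pd i ((MvPowerSeries.X k : PS n) ^ 2)
      = ((2 : ℕ) : PS n) * (MvPowerSeries.X k * if k = i then 1 else 0) := by
    intro k
    rw [show (2 : ℕ) = 1 + 1 from rfl, pd_pow_succ, pow_one, pd_X]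
  rw [Finset.sum_congr rfl (fun k _ => hterm k)]
  rw [Finset.sum_eq_single i (fun k _ hk => by rw [if_neg hk, mul_zero, mul_zero])
    (fun h => absurd (Finset.mem_univ i) h)]
  rw [if_pos rfl, mul_one]
  have h2 : ((2 : ℕ) : PS n) = MvPowerSeries.C (σ := Fin n) (R := ℂ) 2 := by
    push_cast
    rfl
  rw [h2, ← mul_assoc, ← map_mul,
    show (1 / 2 : ℂ) * 2 = 1 by norm_num, map_one, one_mul]

end S13

namespace S13
open MvPowerSeries Finset
variable {n : ℕ}

lemma ONE (H N : Fin n → PS n) (hN : vordGE 1 N)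
    (hinv1 : ∀ i, sub (MvPowerSeries.X i - H i) (fun k => MvPowerSeries.X k + N k)
       = MvPowerSeries.X i)
    (P : PS n) (hP : ∀ i, H i = pd i P) : ∃ Q, ∀ i, N i = pd i Q := by
  set G : Fin n → PS n := fun k => MvPowerSeries.X k + N k with hGdef
  have hG : vordGE 1 G := vordGE_G hN
  set Ptil : PS n := halfsq - P with hPtil
  have hpdPtil : ∀ k, pd k Ptil = MvPowerSeries.X k - H k := fun k => by
    rw [hPtil, pd_sub, pd_halfsq, hP k]
  set Qtil : PS n := (∑ k, MvPowerSeries.X k * G k) - sub Ptil G with hQtil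
  have hpdQtil : ∀ i, pd i Qtil = G i := by
    intro i
    rw [hQtil, pd_sub, chain hG Ptil i, pd_sum]
    have hsum1 : ∑ k, pd i (MvPowerSeries.X k * G k)
        = G i + ∑ k, MvPowerSeries.X k * pd i (G k) := by
      have hterm : ∀ k, pd i (MvPowerSeries.X k * G k)
          = (if k = i then 1 else 0) * G k + MvPowerSeries.X k * pd i (G k) := fun k => by
        rw [pd_mul, pd_X]
      rw [Finset.sum_congr rfl fun k _ => hterm k, Finset.sum_add_distrib]
      congr 1
      rw [Finset.sum_eq_single i (fun k _ hk => by rw [if_neg hk, zero_mul])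
        (fun h => absurd (Finset.mem_univ i) h), if_pos rfl, one_mul]
    have hsum2 : ∑ k, sub (pd k Ptil) G * pd i (G k)
        = ∑ k, MvPowerSeries.X k * pd i (G k) := by
      apply Finset.sum_congr rfl
      intro k _
      rw [hpdPtil k, hinv1 k]
    rw [hsum1, hsum2]; ring
  refine ⟨Qtil - halfsq, fun i => ?_⟩
  rw [pd_sub, hpdQtil i, pd_halfsq]
  simp only [hGdef]
  ring

lemma isSymm_iff' {A : Matrix (Fin n) (Fin n) (PS n)} :
    A.IsSymm ↔ ∀ i j, A j i = A i j := by
  constructor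
  · intro h i j
    have h' : A.transpose i j = A i j := by rw [h]
    rwa [Matrix.transpose_apply] at h'
  · intro h
    ext i j
    rw [Matrix.transpose_apply, h]

lemma jac_sub_symm_iff (H : Fin n → PS n) :
    (jac fun i => MvPowerSeries.X i - H i).IsSymm ↔ ∀ i j, pd j (H i) = pd i (H j) := by
  rw [isSymm_iff']
  constructor
  · intro h i j
    have h0 := h i j
    show pd j (H i) = pd i (H j)
    have hX : pd i (MvPowerSeries.X j : PS n) = pd j (MvPowerSeries.X i) := by
      rw [pd_X, pd_X]; simp [eq_comm]
    change pd i (MvPowerSeries.X j - H j) = pd j (MvPowerSeries.X i - H i) at h0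
    rw [pd_sub, pd_sub, hX] at h0
    exact (sub_right_inj.mp h0).symm
  · intro h i j
    show pd i (MvPowerSeries.X j - H j) = pd j (MvPowerSeries.X i - H i)
    rw [pd_sub, pd_sub, pd_X, pd_X, h j i]
    have : (if j = i then (1 : PS n) else 0) = (if i = j then 1 else 0) := by simp [eq_comm]
    rw [this]

lemma jac_add_symm_iff (N : Fin n → PS n) :
    (jac fun i => MvPowerSeries.X i + N i).IsSymm ↔ ∀ i j, pd j (N i) = pd i (N j) := by
  rw [isSymm_iff']
  constructor
  · intro h i j
    have h0 := h i j
    have hX : pd i (MvPowerSeries.X j : PS n) = pd j (MvPowerSeries.X i) := by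
      rw [pd_X, pd_X]; simp [eq_comm]
    change pd i (MvPowerSeries.X j + N j) = pd j (MvPowerSeries.X i + N i) at h0
    rw [pd_add, pd_add, hX] at h0
    exact (add_right_inj _ |>.mp h0).symm
  · intro h i j
    show pd i (MvPowerSeries.X j + N j) = pd j (MvPowerSeries.X i + N i)
    rw [pd_add, pd_add, pd_X, pd_X, h j i]
    have : (if j = i then (1 : PS n) else 0) = (if i = j then 1 else 0) := by simp [eq_comm]
    rw [this]

lemma grad_iff_symm (H : Fin n → PS n) :
    (∀ i j, pd j (H i) = pd i (H j)) ↔ (∃ P, ∀ i, H i = pd i P) :=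
  ⟨fun h => ⟨Pc H, grad_of_symm h⟩, fun ⟨P, hP⟩ => symm_of_grad P hP⟩

end S13


open S13 in
/-- if `G(z) = z + N(z)` is the formal inverse of `F(z) = z - H(z)`, then `JF`
is symmetric iff `JG` is symmetric; equivalently, `H` is a gradient iff `N` is a gradient. -/
theorem stmt13 {n : ℕ} (H N : Fin n → MvPowerSeries (Fin n) ℂ)
    (hH : vordGE 1 H) (hN : vordGE 1 N)
    (hinv : IsInv (fun i => MvPowerSeries.X i - H i) (fun i => MvPowerSeries.X i + N i)) :
    ((jac fun i => MvPowerSeries.X i - H i).IsSymm ↔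
      (jac fun i => MvPowerSeries.X i + N i).IsSymm) ∧
    ((∃ P : MvPowerSeries (Fin n) ℂ, ∀ i, H i = pd i P) ↔
      (∃ Q : MvPowerSeries (Fin n) ℂ, ∀ i, N i = pd i Q)) := by

  have fwd : (∃ P, ∀ i, H i = pd i P) → (∃ Q, ∀ i, N i = pd i Q) := by
    rintro ⟨P, hP⟩
    exact ONE H N hN (fun i => hinv.1 i) P hP
  have bwd : (∃ Q, ∀ i, N i = pd i Q) → (∃ P, ∀ i, H i = pd i P) := by
    rintro ⟨Q, hQ⟩
    have hH' : vordGE 1 (fun i => -H i) := by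
      intro i d hd
      rw [map_neg, hH i d hd, neg_zero]
    have hinv2 : ∀ i, sub (MvPowerSeries.X i - -N i) (fun k => MvPowerSeries.X k + -H k)
        = MvPowerSeries.X i := by
      intro i
      have h0 := hinv.2 i
      rw [sub_neg_eq_add,
        show (fun k => MvPowerSeries.X k + -H k) = (fun k => MvPowerSeries.X k - H k) from
          funext fun k => (sub_eq_add_neg _ _).symm]
      exact h0
    obtain ⟨Q', hQ'⟩ := ONE (fun i => -N i) (fun i => -H i) hH' hinv2 (-Q)
      (fun i => by rw [pd_neg]; exact congrArg Neg.neg (hQ i))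
    exact ⟨-Q', fun i => by rw [pd_neg, ← hQ' i, neg_neg]⟩
  constructor
  · rw [jac_sub_symm_iff H, jac_add_symm_iff N, grad_iff_symm H, grad_iff_symm N]
    exact ⟨fwd, bwd⟩
  · exact ⟨fwd, bwd⟩
end
end
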